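/- arXiv:1410.6352 — 9 statements merged into one kernel-verified Lean document; each statement's English description precedes it below -/
import Mathlib

section
/- Let G ⊆ ℂ^m and D ⊆ ℂ^n be domains such that G is an analytic retract of D (i.e., there exist holomorphic maps θ : G → D and ι : D → G with ι ∘ θ = id_G). If there is no holomorphic map F : G × G → G satisfying F(z,z) = z and F(z,w) = F(w,z) for all z,w ∈ G, then D is not biholomorphic to any convex domain. -/
open Set

/-!
A convex domain carries the holomorphic symmetric mean `(z, w) ↦ (z + w) / 2`. Such a mean
passes to analytic retracts: if `ι ∘ θ = id` on `G`, then `(z, w) ↦ ι (F (θ z, θ w))` is one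
on `G`. A biholomorphism of `D` onto a convex `Ω` would make `G` a retract of `Ω`.
-/

variable {E E' : Type*} [NormedAddCommGroup E] [NormedSpace ℂ E]
  [NormedAddCommGroup E'] [NormedSpace ℂ E']

def HasHolomorphicSymmetricMean (S : Set E) : Prop :=
  ∃ F : E × E → E, DifferentiableOn ℂ F (S ×ˢ S) ∧ MapsTo F (S ×ˢ S) S ∧
    (∀ z ∈ S, F (z, z) = z) ∧ (∀ z ∈ S, ∀ w ∈ S, F (z, w) = F (w, z))

theorem Convex.hasHolomorphicSymmetricMean {S : Set E} (hS : Convex ℝ S) :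
    HasHolomorphicSymmetricMean S := by
  refine ⟨fun p => (2⁻¹ : ℂ) • (p.1 + p.2), ?_, ?_, ?_, ?_⟩
  · exact (differentiableOn_fst.add differentiableOn_snd).const_smul _
  · rintro ⟨z, w⟩ ⟨hz, hw⟩
    have hhalf : ((2⁻¹ : ℝ) : ℂ) = 2⁻¹ := by norm_num
    simpa only [smul_add, ← hhalf, Complex.coe_smul] using
      hS hz hw (by norm_num : (0 : ℝ) ≤ 2⁻¹) (by norm_num : (0 : ℝ) ≤ 2⁻¹) (by norm_num)
  · intro z _
    dsimp only
    rw [← two_smul ℂ z, smul_smul]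
    norm_num
  · intro z _ w _
    simp only [add_comm]

theorem HasHolomorphicSymmetricMean.of_retract {S : Set E} {T : Set E'}
    (hS : HasHolomorphicSymmetricMean S) {θ : E' → E} {ι : E → E'}
    (hθ : DifferentiableOn ℂ θ T) (hθmaps : MapsTo θ T S)
    (hι : DifferentiableOn ℂ ι S) (hιmaps : MapsTo ι S T)
    (hretract : ∀ x ∈ T, ι (θ x) = x) :
    HasHolomorphicSymmetricMean T := by
  obtain ⟨F, hF, hFmaps, hFdiag, hFsymm⟩ := hS
  have hθθ : DifferentiableOn ℂ (fun p : E' × E' => (θ p.1, θ p.2)) (T ×ˢ T) :=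
    (hθ.comp differentiableOn_fst fun _ hp => hp.1).prodMk
      (hθ.comp differentiableOn_snd fun _ hp => hp.2)
  have hθθmaps : MapsTo (fun p : E' × E' => (θ p.1, θ p.2)) (T ×ˢ T) (S ×ˢ S) :=
    fun _ hp => ⟨hθmaps hp.1, hθmaps hp.2⟩
  refine ⟨fun p => ι (F (θ p.1, θ p.2)), ?_, ?_, ?_, ?_⟩
  · exact hι.comp (hF.comp hθθ hθθmaps) (hFmaps.comp hθθmaps)
  · exact hιmaps.comp (hFmaps.comp hθθmaps)
  · intro z hz
    simp only [hFdiag _ (hθmaps hz), hretract z hz]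
  · intro z hz w hw
    simp only [hFsymm _ (hθmaps hz) _ (hθmaps hw)]

theorem not_biholomorphic_to_convex_of_retract_no_symmetric_mean_general
    (m n : ℕ) (G : Set (Fin m → ℂ)) (D : Set (Fin n → ℂ))
    (θ : (Fin m → ℂ) → (Fin n → ℂ)) (ι : (Fin n → ℂ) → (Fin m → ℂ))
    (hθ : DifferentiableOn ℂ θ G) (hθmaps : MapsTo θ G D)
    (hι : DifferentiableOn ℂ ι D) (hιmaps : MapsTo ι D G)
    (hretract : ∀ x ∈ G, ι (θ x) = x)
    (hnoF : ¬ ∃ F : (Fin m → ℂ) × (Fin m → ℂ) → (Fin m → ℂ),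
      DifferentiableOn ℂ F (G ×ˢ G) ∧ MapsTo F (G ×ˢ G) G ∧
      (∀ z ∈ G, F (z, z) = z) ∧
      (∀ z ∈ G, ∀ w ∈ G, F (z, w) = F (w, z))) :
    ¬ ∃ (Ω : Set (Fin n → ℂ)) (f : (Fin n → ℂ) → (Fin n → ℂ))
        (g : (Fin n → ℂ) → (Fin n → ℂ)),
      IsOpen Ω ∧ Convex ℝ Ω ∧
      DifferentiableOn ℂ f D ∧ MapsTo f D Ω ∧
      DifferentiableOn ℂ g Ω ∧ MapsTo g Ω D ∧
      (∀ x ∈ D, g (f x) = x) ∧ (∀ y ∈ Ω, f (g y) = y) := by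
  rintro ⟨Ω, f, g, -, hΩ, hf, hfmaps, hg, hgmaps, hgf, -⟩
  refine hnoF (hΩ.hasHolomorphicSymmetricMean.of_retract (hf.comp hθ hθmaps)
    (hfmaps.comp hθmaps) (hι.comp hg hgmaps) (hιmaps.comp hgmaps) fun x hx => ?_)
  simp only [Function.comp_apply, hgf _ (hθmaps hx), hretract x hx]

/-- If `G ⊆ ℂ^m` is an analytic retract of a domain `D ⊆ ℂ^n` and there is no holomorphic
map `F : G × G → G` with `F(z,z) = z` and `F(z,w) = F(w,z)`, then `D` is not biholomorphic
to any convex domain. -/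
theorem not_biholomorphic_to_convex_of_retract_no_symmetric_mean
    (m n : ℕ) (G : Set (Fin m → ℂ)) (D : Set (Fin n → ℂ))
    (hGopen : IsOpen G) (hGconn : IsConnected G)
    (hDopen : IsOpen D) (hDconn : IsConnected D)
    (θ : (Fin m → ℂ) → (Fin n → ℂ)) (ι : (Fin n → ℂ) → (Fin m → ℂ))
    (hθ : DifferentiableOn ℂ θ G) (hθmaps : MapsTo θ G D)
    (hι : DifferentiableOn ℂ ι D) (hιmaps : MapsTo ι D G)
    (hretract : ∀ x ∈ G, ι (θ x) = x)
    (hnoF : ¬ ∃ F : (Fin m → ℂ) × (Fin m → ℂ) → (Fin m → ℂ),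
      DifferentiableOn ℂ F (G ×ˢ G) ∧ MapsTo F (G ×ˢ G) G ∧
      (∀ z ∈ G, F (z, z) = z) ∧
      (∀ z ∈ G, ∀ w ∈ G, F (z, w) = F (w, z))) :
    ¬ ∃ (Ω : Set (Fin n → ℂ)) (f : (Fin n → ℂ) → (Fin n → ℂ))
        (g : (Fin n → ℂ) → (Fin n → ℂ)),
      IsOpen Ω ∧ Convex ℝ Ω ∧
      DifferentiableOn ℂ f D ∧ MapsTo f D Ω ∧
      DifferentiableOn ℂ g Ω ∧ MapsTo g Ω D ∧
      (∀ x ∈ D, g (f x) = x) ∧ (∀ y ∈ Ω, f (g y) = y) :=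
  not_biholomorphic_to_convex_of_retract_no_symmetric_mean_general m n G D θ ι hθ hθmaps hι hιmaps
    hretract hnoF
end

section
/- Let G be an analytic retract of a domain D. If the Lempert function l_G of G fails to satisfy the triangle inequality (i.e., is not a distance), then the Lempert function l_D of D also fails to be a distance; in particular the Carathéodory pseudodistance c_D and l_D are not identically equal on D. -/
/-!
Discs in `G` are pushed into `D` by `θ` and discs in `D` are pulled back into `G` by `ι`, so
`l_D (θ a) (θ b) = l_G a b`, and a violation of the triangle inequality for `l_G` at `a, b, c`
is one for `l_D` at `θ a, θ b, θ c`. On the other hand `c_D` always satisfies the triangle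
inequality, because the Poincaré distance does (by the strong triangle inequality for
`‖(a - b) / (1 - conj a * b)‖`, reduced to base point `0` by a Möbius map and Schwarz–Pick).
For this the supremum defining `c_D` must be finite: Schwarz–Pick along short affine discs bounds
`ρ (f z) (f w)` uniformly in `f` for `w` near `z`, and connectedness of `D` propagates the bound.
-/

open Set Metric

/-- The Poincaré distance on the unit disc:
`ρ(a,b) = artanh |(a-b)/(1 - ā b)| = ½ log((1+d)/(1-d))`. -/
noncomputable def poincareDist (a b : ℂ) : ℝ :=
  Real.log ((1 + ‖(a - b) / (1 - (starRingEnd ℂ) a * b)‖) /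
    (1 - ‖(a - b) / (1 - (starRingEnd ℂ) a * b)‖)) / 2

/-- The Lempert function of a domain `D ⊆ ℂ^n`. -/
noncomputable def lempert (n : ℕ) (D : Set (Fin n → ℂ)) (z w : Fin n → ℂ) : ℝ :=
  sInf {t : ℝ | ∃ f : ℂ → (Fin n → ℂ), DifferentiableOn ℂ f (ball (0 : ℂ) 1) ∧
    MapsTo f (ball (0 : ℂ) 1) D ∧ f 0 = z ∧
    ∃ lam ∈ ball (0 : ℂ) 1, f lam = w ∧ t = poincareDist 0 lam}

/-- The Kobayashi pseudodistance of `D`: the largest pseudodistance dominated by the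
Lempert function, given by infima of sums of Lempert distances along finite chains. -/
noncomputable def kobayashi (n : ℕ) (D : Set (Fin n → ℂ)) (z w : Fin n → ℂ) : ℝ :=
  sInf {t : ℝ | ∃ (N : ℕ) (c : ℕ → (Fin n → ℂ)), c 0 = z ∧ c N = w ∧
    (∀ i ≤ N, c i ∈ D) ∧ t = ∑ i ∈ Finset.range N, lempert n D (c i) (c (i + 1))}

/-- The Carathéodory pseudodistance of `D`. -/
noncomputable def caratheodory (n : ℕ) (D : Set (Fin n → ℂ)) (z w : Fin n → ℂ) : ℝ :=
  sSup {t : ℝ | ∃ f : (Fin n → ℂ) → ℂ, DifferentiableOn ℂ f D ∧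
    MapsTo f D (ball (0 : ℂ) 1) ∧ t = poincareDist (f z) (f w)}

open ComplexConjugate Topology

noncomputable def mobius (a z : ℂ) : ℂ := (a - z) / (1 - conj a * z)

section Mobius

variable {a b c z : ℂ}

theorem one_sub_conj_mul_ne_zero (ha : ‖a‖ < 1) (hb : ‖b‖ < 1) : 1 - conj a * b ≠ 0 := by
  rw [sub_ne_zero]
  intro h
  have : ‖conj a * b‖ < 1 := by
    rw [norm_mul, Complex.norm_conj]
    exact mul_lt_one_of_nonneg_of_lt_one_left (norm_nonneg a) ha hb.le
  simp [← h] at this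

theorem norm_one_sub_conj_mul_sq_sub_norm_sub_sq (a b : ℂ) :
    ‖1 - conj a * b‖ ^ 2 - ‖a - b‖ ^ 2 = (1 - ‖a‖ ^ 2) * (1 - ‖b‖ ^ 2) := by
  simp only [Complex.sq_norm, Complex.normSq_apply, Complex.sub_re, Complex.sub_im,
    Complex.mul_re, Complex.mul_im, Complex.conj_re, Complex.conj_im, Complex.one_re,
    Complex.one_im]
  ring

theorem norm_mobius_lt_one (ha : ‖a‖ < 1) (hz : ‖z‖ < 1) : ‖mobius a z‖ < 1 := by
  have hden := norm_pos_iff.2 (one_sub_conj_mul_ne_zero ha hz)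
  rw [mobius, norm_div, div_lt_one hden]
  have hid := norm_one_sub_conj_mul_sq_sub_norm_sub_sq a z
  have hpos : 0 < (1 - ‖a‖ ^ 2) * (1 - ‖z‖ ^ 2) := by
    apply mul_pos <;> nlinarith [norm_nonneg a, norm_nonneg z]
  exact (pow_lt_pow_iff_left₀ (norm_nonneg _) hden.le two_ne_zero).1 (by linarith)

theorem norm_mobius_comm (a b : ℂ) : ‖mobius a b‖ = ‖mobius b a‖ := by
  have : 1 - conj b * a = conj (1 - conj a * b) := by simp [mul_comm]
  rw [mobius, mobius, norm_div, norm_div, norm_sub_rev, this, Complex.norm_conj]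

@[simp] theorem mobius_zero (a : ℂ) : mobius a 0 = a := by simp [mobius]

@[simp] theorem mobius_self (a : ℂ) : mobius a a = 0 := by simp [mobius]

theorem mobius_mobius (ha : ‖a‖ < 1) (hz : ‖z‖ < 1) : mobius a (mobius a z) = z := by
  have hw : mobius a z * (1 - conj a * z) = a - z :=
    div_mul_cancel₀ _ (one_sub_conj_mul_ne_zero ha hz)
  rw [mobius, div_eq_iff (one_sub_conj_mul_ne_zero ha (norm_mobius_lt_one ha hz))]
  linear_combination -hw

theorem differentiableOn_mobius (ha : ‖a‖ < 1) :
    DifferentiableOn ℂ (mobius a) (ball 0 1) :=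
  .div (by fun_prop) (by fun_prop) fun _ hz ↦
    one_sub_conj_mul_ne_zero ha (mem_ball_zero_iff.1 hz)

theorem mapsTo_mobius (ha : ‖a‖ < 1) :
    MapsTo (mobius a) (ball 0 1) (ball 0 1) := fun _ hz ↦
  mem_ball_zero_iff.2 (norm_mobius_lt_one ha (mem_ball_zero_iff.1 hz))

/-- Schwarz–Pick: conjugating `h` by Möbius maps gives a self-map of the disc fixing `0`, to
which the Schwarz lemma applies. -/
theorem norm_mobius_le_of_mapsTo_ball {h : ℂ → ℂ} (hd : DifferentiableOn ℂ h (ball 0 1))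
    (hm : MapsTo h (ball 0 1) (ball 0 1)) {x y : ℂ} (hx : ‖x‖ < 1)
    (hy : ‖y‖ < 1) : ‖mobius (h x) (h y)‖ ≤ ‖mobius x y‖ := by
  have hhx : ‖h x‖ < 1 := mem_ball_zero_iff.1 (hm (mem_ball_zero_iff.2 hx))
  have hm' : MapsTo (h ∘ mobius x) (ball 0 1) (ball 0 1) := hm.comp (mapsTo_mobius hx)
  have schwarz := Complex.norm_le_norm_of_mapsTo_ball (f := mobius (h x) ∘ h ∘ mobius x)
    ((differentiableOn_mobius hhx).comp (hd.comp (differentiableOn_mobius hx) (mapsTo_mobius hx))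
      hm')
    (((mapsTo_mobius hhx).comp hm').mono_right ball_subset_closedBall) (by simp)
    (norm_mobius_lt_one hx hy)
  rwa [Function.comp_apply, Function.comp_apply, mobius_mobius hx hy] at schwarz

theorem norm_mobius_le_norm_add_norm_div (ha : ‖a‖ < 1) (hc : ‖c‖ < 1) :
    ‖mobius a c‖ ≤ (‖a‖ + ‖c‖) / (1 + ‖a‖ * ‖c‖) := by
  set s := (conj a * c).re
  have hs : -(‖a‖ * ‖c‖) ≤ s := neg_le_of_abs_le <| by
    simpa only [norm_mul, Complex.norm_conj] using Complex.abs_re_le_norm (conj a * c)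
  have e₁ : ‖a - c‖ ^ 2 = ‖a‖ ^ 2 + ‖c‖ ^ 2 - 2 * s := by
    simp only [s, Complex.sq_norm, Complex.normSq_apply, Complex.sub_re, Complex.sub_im,
      Complex.mul_re, Complex.conj_re, Complex.conj_im]
    ring
  have e₂ : ‖1 - conj a * c‖ ^ 2 = 1 - 2 * s + ‖a‖ ^ 2 * ‖c‖ ^ 2 := by
    simp only [s, Complex.sq_norm, Complex.normSq_apply, Complex.sub_re, Complex.sub_im,
      Complex.mul_re, Complex.mul_im, Complex.conj_re, Complex.conj_im, Complex.one_re,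
      Complex.one_im]
    ring
  have hden := norm_pos_iff.2 (one_sub_conj_mul_ne_zero ha hc)
  rw [mobius, norm_div, div_le_div_iff₀ hden (by positivity)]
  refine (pow_le_pow_iff_left₀ (by positivity) (by positivity) two_ne_zero).1 ?_
  rw [mul_pow, mul_pow, e₁, e₂]
  have ha₂ : 0 ≤ 1 - ‖a‖ ^ 2 := by nlinarith [norm_nonneg a]
  have hc₂ : 0 ≤ 1 - ‖c‖ ^ 2 := by nlinarith [norm_nonneg c]
  -- the difference of the two sides is `2 (s + ‖a‖‖c‖) (1 - ‖a‖²) (1 - ‖c‖²)`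
  nlinarith [mul_nonneg (mul_nonneg (neg_le_iff_add_nonneg.1 hs) ha₂) hc₂]

theorem norm_mobius_triangle (ha : ‖a‖ < 1) (hb : ‖b‖ < 1) (hc : ‖c‖ < 1) :
    ‖mobius a c‖ ≤ (‖mobius a b‖ + ‖mobius b c‖) / (1 + ‖mobius a b‖ * ‖mobius b c‖) :=
  calc ‖mobius a c‖ = ‖mobius (mobius b (mobius b a)) (mobius b (mobius b c))‖ := by
        rw [mobius_mobius hb ha, mobius_mobius hb hc]
    _ ≤ ‖mobius (mobius b a) (mobius b c)‖ :=
        norm_mobius_le_of_mapsTo_ball (differentiableOn_mobius hb) (mapsTo_mobius hb)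
          (norm_mobius_lt_one hb ha) (norm_mobius_lt_one hb hc)
    _ ≤ _ :=
        norm_mobius_le_norm_add_norm_div (norm_mobius_lt_one hb ha) (norm_mobius_lt_one hb hc)
    _ = _ := by rw [norm_mobius_comm b a]

end Mobius

theorem Real.artanh_add_artanh {x y : ℝ} (hx : x ∈ Ioo (-1) 1) (hy : y ∈ Ioo (-1) 1) :
    Real.artanh x + Real.artanh y = Real.artanh ((x + y) / (1 + x * y)) := by
  obtain ⟨hx₁, hx₂⟩ := hx
  obtain ⟨hy₁, hy₂⟩ := hy
  have hxy : 0 < 1 + x * y := by nlinarith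
  have hw : (x + y) / (1 + x * y) ∈ Icc (-1) 1 := by
    constructor
    · rw [le_div_iff₀ hxy]; nlinarith
    · rw [div_le_one hxy]; nlinarith
  rw [Real.artanh_eq_half_log ⟨hx₁.le, hx₂.le⟩, Real.artanh_eq_half_log ⟨hy₁.le, hy₂.le⟩,
    Real.artanh_eq_half_log hw, ← mul_add,
    ← Real.log_mul (div_pos (by linarith) (by linarith)).ne'
      (div_pos (by linarith) (by linarith)).ne']
  congr 2
  have : 1 + x * y - (x + y) ≠ 0 := by nlinarith
  field_simp
  ring

theorem poincareDist_eq_artanh {a b : ℂ} (ha : ‖a‖ < 1) (hb : ‖b‖ < 1) :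
    poincareDist a b = Real.artanh ‖mobius a b‖ := by
  rw [Real.artanh_eq_half_log ⟨by linarith [norm_nonneg (mobius a b)],
    (norm_mobius_lt_one ha hb).le⟩, poincareDist, mobius]
  ring

@[simp] theorem poincareDist_self (a : ℂ) : poincareDist a a = 0 := by simp [poincareDist]

theorem poincareDist_comm (a b : ℂ) : poincareDist a b = poincareDist b a := by
  have := norm_mobius_comm a b
  simp only [mobius] at this
  rw [poincareDist, poincareDist, this]

theorem poincareDist_triangle {a b c : ℂ} (ha : ‖a‖ < 1) (hb : ‖b‖ < 1) (hc : ‖c‖ < 1) :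
    poincareDist a c ≤ poincareDist a b + poincareDist b c := by
  rw [poincareDist_eq_artanh ha hc, poincareDist_eq_artanh ha hb, poincareDist_eq_artanh hb hc]
  set p := ‖mobius a b‖
  set q := ‖mobius b c‖
  have hp : p < 1 := norm_mobius_lt_one ha hb
  have hq : q < 1 := norm_mobius_lt_one hb hc
  have hp₀ : 0 ≤ p := norm_nonneg _
  have hq₀ : 0 ≤ q := norm_nonneg _
  rw [Real.artanh_add_artanh ⟨by linarith, hp⟩ ⟨by linarith, hq⟩]
  refine Real.artanh_le_artanh (by linarith [norm_nonneg (mobius a c)]) ?_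
    (norm_mobius_triangle ha hb hc)
  rw [div_lt_one (by positivity)]
  nlinarith

theorem poincareDist_le_of_mapsTo_ball {h : ℂ → ℂ} (hd : DifferentiableOn ℂ h (ball 0 1))
    (hm : MapsTo h (ball 0 1) (ball 0 1)) {x y : ℂ} (hx : ‖x‖ < 1) (hy : ‖y‖ < 1) :
    poincareDist (h x) (h y) ≤ poincareDist x y := by
  have hhx : ‖h x‖ < 1 := mem_ball_zero_iff.1 (hm (mem_ball_zero_iff.2 hx))
  have hhy : ‖h y‖ < 1 := mem_ball_zero_iff.1 (hm (mem_ball_zero_iff.2 hy))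
  rw [poincareDist_eq_artanh hhx hhy, poincareDist_eq_artanh hx hy]
  exact Real.artanh_le_artanh (by linarith [norm_nonneg (mobius (h x) (h y))])
    (norm_mobius_lt_one hx hy) (norm_mobius_le_of_mapsTo_ball hd hm hx hy)

section

variable {E : Type*} [NormedAddCommGroup E] [NormedSpace ℂ E] {D : Set E}

theorem poincareDist_le_of_disc {f : E → ℂ} (hf : DifferentiableOn ℂ f D)
    (hfD : MapsTo f D (ball 0 1)) {φ : ℂ → E} (hφ : DifferentiableOn ℂ φ (ball 0 1))
    (hφD : MapsTo φ (ball 0 1) D) {t : ℂ} (ht : ‖t‖ < 1) :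
    poincareDist (f (φ 0)) (f (φ t)) ≤ poincareDist 0 t :=
  poincareDist_le_of_mapsTo_ball (hf.comp hφ hφD) (hfD.comp hφD) (by simp) ht

theorem eventually_poincareDist_le (hD : IsOpen D) {z : E} (hz : z ∈ D) :
    ∀ᶠ w in 𝓝 z, ∀ f : E → ℂ, DifferentiableOn ℂ f D → MapsTo f D (ball 0 1) →
      poincareDist (f z) (f w) ≤ poincareDist 0 (1 / 2) := by
  obtain ⟨r, hr, hrD⟩ := Metric.isOpen_iff.1 hD z hz
  filter_upwards [ball_mem_nhds z (half_pos hr)] with w hw f hf hfD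
  have hφD : MapsTo (fun t : ℂ ↦ z + (2 * t) • (w - z)) (ball 0 1) D := fun t ht ↦ by
    refine hrD (mem_ball_iff_norm.2 ?_)
    rw [add_sub_cancel_left, norm_smul, norm_mul, Complex.norm_two, ← dist_eq_norm]
    rw [mem_ball_zero_iff] at ht
    rw [mem_ball] at hw
    nlinarith [norm_nonneg t, dist_nonneg (x := w) (y := z)]
  simpa [show (2 : ℂ) * (1 / 2) = 1 by norm_num] using
    poincareDist_le_of_disc hf hfD (by fun_prop) hφD (t := 1 / 2) (by norm_num)

theorem exists_forall_poincareDist_le (hD : IsOpen D) (hD' : IsPreconnected D) {z w : E}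
    (hz : z ∈ D) (hw : w ∈ D) :
    ∃ M, ∀ f : E → ℂ, DifferentiableOn ℂ f D → MapsTo f D (ball 0 1) →
      poincareDist (f z) (f w) ≤ M := by
  refine hD'.induction₂ (fun x y ↦ ∃ M, ∀ f : E → ℂ, DifferentiableOn ℂ f D →
    MapsTo f D (ball 0 1) → poincareDist (f x) (f y) ≤ M) ?_ ?_ ?_ hz hw
  · exact fun x hx ↦ ((eventually_poincareDist_le hD hx).filter_mono nhdsWithin_le_nhds).mono
      fun y hy ↦ ⟨_, hy⟩
  · rintro x y v hx hy hv ⟨M, hM⟩ ⟨N, hN⟩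
    refine ⟨M + N, fun f hf hfD ↦ ?_⟩
    have := poincareDist_triangle (mem_ball_zero_iff.1 (hfD hx)) (mem_ball_zero_iff.1 (hfD hy))
      (mem_ball_zero_iff.1 (hfD hv))
    linarith [hM f hf hfD, hN f hf hfD]
  · rintro x y - - ⟨M, hM⟩
    exact ⟨M, fun f hf hfD ↦ poincareDist_comm (f y) (f x) ▸ hM f hf hfD⟩

end

section

variable {n : ℕ} {D : Set (Fin n → ℂ)}

theorem poincareDist_le_caratheodory (hD : IsOpen D) (hD' : IsPreconnected D)
    {z w : Fin n → ℂ} (hz : z ∈ D) (hw : w ∈ D) {f : (Fin n → ℂ) → ℂ}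
    (hf : DifferentiableOn ℂ f D) (hfD : MapsTo f D (ball 0 1)) :
    poincareDist (f z) (f w) ≤ caratheodory n D z w := by
  obtain ⟨M, hM⟩ := exists_forall_poincareDist_le hD hD' hz hw
  exact le_csSup ⟨M, by rintro _ ⟨g, hg, hgD, rfl⟩; exact hM g hg hgD⟩ ⟨f, hf, hfD, rfl⟩

theorem caratheodory_triangle (hD : IsOpen D) (hD' : IsPreconnected D) {u v w : Fin n → ℂ}
    (hu : u ∈ D) (hv : v ∈ D) (hw : w ∈ D) :
    caratheodory n D u w ≤ caratheodory n D u v + caratheodory n D v w := by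
  refine csSup_le ⟨0, fun _ ↦ 0, differentiableOn_const 0, fun _ _ ↦ mem_ball_self one_pos,
    (poincareDist_self 0).symm⟩ ?_
  rintro _ ⟨f, hf, hfD, rfl⟩
  have := poincareDist_triangle (mem_ball_zero_iff.1 (hfD hu)) (mem_ball_zero_iff.1 (hfD hv))
    (mem_ball_zero_iff.1 (hfD hw))
  linarith [poincareDist_le_caratheodory hD hD' hu hv hf hfD,
    poincareDist_le_caratheodory hD hD' hv hw hf hfD]

end

theorem lempert_map_eq_of_retract {m n : ℕ} {G : Set (Fin m → ℂ)} {D : Set (Fin n → ℂ)}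
    {θ : (Fin m → ℂ) → (Fin n → ℂ)} {ι : (Fin n → ℂ) → (Fin m → ℂ)}
    (hθ : DifferentiableOn ℂ θ G) (hθmaps : MapsTo θ G D)
    (hι : DifferentiableOn ℂ ι D) (hιmaps : MapsTo ι D G)
    (hretract : ∀ x ∈ G, ι (θ x) = x) {a b : Fin m → ℂ} (ha : a ∈ G) (hb : b ∈ G) :
    lempert n D (θ a) (θ b) = lempert m G a b := by
  unfold lempert
  congr 1
  ext t
  constructor
  · rintro ⟨f, hf, hfD, hf0, s, hs, hfs, rfl⟩
    refine ⟨ι ∘ f, hι.comp hf hfD, hιmaps.comp hfD, ?_, s, hs, ?_, rfl⟩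
    · rw [Function.comp_apply, hf0, hretract a ha]
    · rw [Function.comp_apply, hfs, hretract b hb]
  · rintro ⟨f, hf, hfG, rfl, s, hs, rfl, rfl⟩
    exact ⟨θ ∘ f, hθ.comp hf hfG, hθmaps.comp hfG, rfl, s, hs, rfl, rfl⟩

theorem lempert_not_distance_of_retract_general
    (m n : ℕ) (G : Set (Fin m → ℂ)) (D : Set (Fin n → ℂ))
    (hDopen : IsOpen D) (hDconn : IsConnected D)
    (θ : (Fin m → ℂ) → (Fin n → ℂ)) (ι : (Fin n → ℂ) → (Fin m → ℂ))
    (hθ : DifferentiableOn ℂ θ G) (hθmaps : MapsTo θ G D)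
    (hι : DifferentiableOn ℂ ι D) (hιmaps : MapsTo ι D G)
    (hretract : ∀ x ∈ G, ι (θ x) = x)
    (hG : ∃ a ∈ G, ∃ b ∈ G, ∃ c ∈ G,
      lempert m G a b + lempert m G b c < lempert m G a c) :
    (∃ a ∈ D, ∃ b ∈ D, ∃ c ∈ D,
      lempert n D a b + lempert n D b c < lempert n D a c) ∧
    ¬ (∀ z ∈ D, ∀ w ∈ D, caratheodory n D z w = lempert n D z w) := by
  obtain ⟨a, ha, b, hb, c, hc, hlt⟩ := hG
  have hl {x y} := lempert_map_eq_of_retract hθ hθmaps hι hιmaps hretract (a := x) (b := y)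
  rw [← hl ha hb, ← hl hb hc, ← hl ha hc] at hlt
  refine ⟨⟨θ a, hθmaps ha, θ b, hθmaps hb, θ c, hθmaps hc, hlt⟩, fun hcl ↦ ?_⟩
  have := caratheodory_triangle hDopen hDconn.isPreconnected (hθmaps ha) (hθmaps hb) (hθmaps hc)
  rw [hcl _ (hθmaps ha) _ (hθmaps hb), hcl _ (hθmaps hb) _ (hθmaps hc),
    hcl _ (hθmaps ha) _ (hθmaps hc)] at this
  linarith

/-- If `G` is an analytic retract of `D` and the Lempert function of `G` fails the triangle
inequality, then so does the Lempert function of `D`; in particular `c_D ≢ l_D`. -/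
theorem lempert_not_distance_of_retract
    (m n : ℕ) (G : Set (Fin m → ℂ)) (D : Set (Fin n → ℂ))
    (hGopen : IsOpen G) (hGconn : IsConnected G)
    (hDopen : IsOpen D) (hDconn : IsConnected D)
    (θ : (Fin m → ℂ) → (Fin n → ℂ)) (ι : (Fin n → ℂ) → (Fin m → ℂ))
    (hθ : DifferentiableOn ℂ θ G) (hθmaps : MapsTo θ G D)
    (hι : DifferentiableOn ℂ ι D) (hιmaps : MapsTo ι D G)
    (hretract : ∀ x ∈ G, ι (θ x) = x)
    (hG : ∃ a ∈ G, ∃ b ∈ G, ∃ c ∈ G,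
      lempert m G a b + lempert m G b c < lempert m G a c) :
    (∃ a ∈ D, ∃ b ∈ D, ∃ c ∈ D,
      lempert n D a b + lempert n D b c < lempert n D a c) ∧
    ¬ (∀ z ∈ D, ∀ w ∈ D, caratheodory n D z w = lempert n D z w) :=
  lempert_not_distance_of_retract_general m n G D hDopen hDconn θ ι hθ hθmaps hι hιmaps hretract hG
end

section
/- Let n ≥ 2, s ≤ n, and r₁,…,r_s positive integers with Σ r_j = n. Let A(r₁,…,r_s) = {α^1,…,α^N} with N = ∏(r_j+1) − 1 be the nonzero multi-indices α with 0 ≤ α_j ≤ r_j, and for x ∈ ℂ^N define R_x(z) = 1 + Σ_{j=1}^N (−1)^{|α^j|} x_j z^{α^j} for z ∈ ℂ^s. Then the generalized tetrablock 𝔼_E := { x ∈ ℂ^N : R_x(z) ≠ 0 for all z in the closed polydisc 𝔻̄^s } is an (|α^1|,…,|α^N|)-balanced open set: if x ∈ 𝔼_E and λ ∈ 𝔻̄, then (λ^{|α^1|} x₁, …, λ^{|α^N|} x_N) ∈ 𝔼_E. -/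
open Set Finset

/-- The set `A(r₁,…,r_s)` of nonzero multi-indices `α` with `0 ≤ α_j ≤ r_j`. -/
def idxSet (s : ℕ) (r : Fin s → ℕ) : Finset (Fin s → ℕ) :=
  (Fintype.piFinset fun j => Finset.range (r j + 1)).erase 0

/-- The polynomial `R_x(z) = 1 + Σ_{α ∈ A} (−1)^{|α|} x_α z^α`. -/
noncomputable def tetraR (s : ℕ) (r : Fin s → ℕ) (x : idxSet s r → ℂ) (z : Fin s → ℂ) : ℂ :=
  1 + ∑ α : idxSet s r, (-1 : ℂ) ^ (∑ j, (α : Fin s → ℕ) j) * x α *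
    ∏ j, z j ^ (α : Fin s → ℕ) j

/-- The generalized tetrablock `𝔼_E = {x ∈ ℂ^N : R_x(z) ≠ 0 ∀ z ∈ 𝔻̄^s}`. -/
noncomputable def genTetrablock (s : ℕ) (r : Fin s → ℕ) : Set (idxSet s r → ℂ) :=
  {x | ∀ z : Fin s → ℂ, (∀ j, ‖z j‖ ≤ 1) → tetraR s r x z ≠ 0}

/-! `R_x(z)` is jointly continuous in `(x, z)` and the closed polydisc is compact, so by the tube
lemma the set of `x` for which `R_x` has no zero on it is open. Balancedness comes from
`R_{m_λ.x}(z) = R_x(λ z)` with `λ z` still in the polydisc when `|λ| ≤ 1`. -/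

open Function

theorem IsCompact.isOpen_setOf_forall_mem_apply_mem {X Y Z : Type*} [TopologicalSpace X]
    [TopologicalSpace Y] [TopologicalSpace Z] {f : X → Y → Z} (hf : Continuous (uncurry f))
    {K : Set Y} (hK : IsCompact K) {U : Set Z} (hU : IsOpen U) :
    IsOpen {x | ∀ y ∈ K, f x y ∈ U} :=
  isOpen_iff_eventually.2 fun _ hx => hK.eventually_forall_of_forall_eventually fun y hy =>
    hf.continuousAt.preimage_mem_nhds (hU.mem_nhds (hx y hy))

theorem continuous_tetraR_uncurry (s : ℕ) (r : Fin s → ℕ) :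
    Continuous (uncurry (tetraR s r)) := by
  unfold tetraR
  fun_prop

theorem tetraR_weighted_smul (s : ℕ) (r : Fin s → ℕ) (x : idxSet s r → ℂ) (lam : ℂ)
    (z : Fin s → ℂ) :
    tetraR s r (fun α => lam ^ (∑ j, (α : Fin s → ℕ) j) * x α) z = tetraR s r x (lam • z) := by
  unfold tetraR
  congr 1
  refine Finset.sum_congr rfl fun α _ => ?_
  simp only [Pi.smul_apply, smul_eq_mul, mul_pow, Finset.prod_mul_distrib,
    Finset.prod_pow_eq_pow_sum]
  ring

-- The closed polydisc is the closed unit ball of the sup norm on `Fin s → ℂ`.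
theorem genTetrablock_eq_setOf_forall_mem_closedBall (s : ℕ) (r : Fin s → ℕ) :
    genTetrablock s r = {x | ∀ z ∈ Metric.closedBall 0 1, tetraR s r x z ∈ ({0}ᶜ : Set ℂ)} := by
  ext x
  simp [genTetrablock, pi_norm_le_iff_of_nonneg]

theorem isOpen_genTetrablock (s : ℕ) (r : Fin s → ℕ) : IsOpen (genTetrablock s r) := by
  rw [genTetrablock_eq_setOf_forall_mem_closedBall]
  exact (isCompact_closedBall 0 1).isOpen_setOf_forall_mem_apply_mem
    (continuous_tetraR_uncurry s r) isOpen_compl_singleton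

theorem genTetrablock_weighted_smul_mem (s : ℕ) (r : Fin s → ℕ) {x : idxSet s r → ℂ}
    (hx : x ∈ genTetrablock s r) {lam : ℂ} (hlam : ‖lam‖ ≤ 1) :
    (fun α : idxSet s r => lam ^ (∑ j, (α : Fin s → ℕ) j) * x α) ∈ genTetrablock s r := by
  intro z hz
  rw [tetraR_weighted_smul]
  refine hx _ fun j => ?_
  simpa only [Pi.smul_apply, smul_eq_mul, norm_mul] using
    mul_le_one₀ hlam (norm_nonneg _) (hz j)

theorem genTetrablock_isOpen_and_quasibalanced_general
    (s : ℕ) (r : Fin s → ℕ) :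
    IsOpen (genTetrablock s r) ∧
    ∀ x ∈ genTetrablock s r, ∀ lam : ℂ, ‖lam‖ ≤ 1 →
      (fun α : idxSet s r => lam ^ (∑ j, (α : Fin s → ℕ) j) * x α) ∈ genTetrablock s r :=
  ⟨isOpen_genTetrablock s r, fun _ hx _ hlam => genTetrablock_weighted_smul_mem s r hx hlam⟩

/-- The generalized tetrablock is an `(|α^1|,…,|α^N|)`-balanced open set. -/
theorem genTetrablock_isOpen_and_quasibalanced
    (n s : ℕ) (hn : 2 ≤ n) (hs : s ≤ n) (r : Fin s → ℕ) (hr : ∀ j, 1 ≤ r j)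
    (hsum : ∑ j, r j = n) :
    IsOpen (genTetrablock s r) ∧
    ∀ x ∈ genTetrablock s r, ∀ lam : ℂ, ‖lam‖ ≤ 1 →
      (fun α : idxSet s r => lam ^ (∑ j, (α : Fin s → ℕ) j) * x α) ∈ genTetrablock s r :=
  genTetrablock_isOpen_and_quasibalanced_general s r
end

section
/- Let s ≥ 2, r_s = 1, and write R_x(z) = R'_{x'}(z') − z_s P_{x''}(z') where x = (x', x'') and z = (z', z_s). Then (x', x'') ∈ 𝔼_E if and only if x' ∈ 𝔼_{E'} and sup_{z' ∈ 𝔻̄^{s−1}} |P_{x''}(z') / R'_{x'}(z')| < 1. -/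
/-!
Splitting off the last variable, which occurs to degree at most one, gives
`R_x(z', w) = R'_{x'}(z') - w P_{x''}(z')`. For fixed `z'`, the affine function
`w ↦ R'(z') - w P(z')` has no zero in the closed unit disc iff `‖P(z')‖ < ‖R'(z')‖`, i.e. iff
`R'(z') ≠ 0` and `‖P(z') / R'(z')‖ < 1`. Once `R'` has no zero on the compact polydisc the quotient
is continuous there, so the pointwise bound is equivalent to the bound on its supremum.
-/

open Set Finset

/-- `ι : 𝔼_E → 𝔼_{E'}` forgetting the coefficients involving the last variable:
`x' α' = x (α',0)`. -/
noncomputable def tetraLower (s' : ℕ) (r : Fin (s' + 1) → ℕ)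
    (x : idxSet (s' + 1) r → ℂ) : idxSet s' (fun j => r (Fin.castLE (Nat.le_succ s') j)) → ℂ :=
  fun α' => if h : (fun j : Fin (s' + 1) =>
        if hj : (j : ℕ) < s' then (α' : Fin s' → ℕ) ⟨j, hj⟩ else 0) ∈ idxSet (s' + 1) r
    then x ⟨_, h⟩ else 0

/-- The polynomial `P_{x''}(z')` with `R_x(z', z_s) = R'_{x'}(z') − z_s P_{x''}(z')`. -/
noncomputable def tetraP (s' : ℕ) (r : Fin (s' + 1) → ℕ)
    (x : idxSet (s' + 1) r → ℂ) (z' : Fin s' → ℂ) : ℂ :=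
  ∑ α : idxSet (s' + 1) r,
    if (α : Fin (s' + 1) → ℕ) (Fin.last s') = 1 then
      (-1 : ℂ) ^ (∑ j : Fin s', (α : Fin (s' + 1) → ℕ) (Fin.castLE (Nat.le_succ s') j)) *
        x α * ∏ j : Fin s', z' j ^ (α : Fin (s' + 1) → ℕ) (Fin.castLE (Nat.le_succ s') j)
    else 0

lemma forall_norm_le_one_sub_mul_ne_zero_iff {𝕜 : Type*} [NormedDivisionRing 𝕜] {a b : 𝕜} :
    (∀ w : 𝕜, ‖w‖ ≤ 1 → a - w * b ≠ 0) ↔ ‖b‖ < ‖a‖ := by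
  constructor
  · intro h
    by_contra! hab
    have hb : b ≠ 0 := by
      rintro rfl
      exact h 0 (by simp) (by simpa using hab)
    refine h (a / b) ?_ (by rw [div_mul_cancel₀ a hb, sub_self])
    rw [norm_div]
    exact div_le_one_of_le₀ hab (norm_nonneg b)
  · intro hab w hw heq
    rw [sub_eq_zero] at heq
    have : ‖a‖ ≤ ‖b‖ := by
      calc ‖a‖ = ‖w‖ * ‖b‖ := by rw [heq, norm_mul]
        _ ≤ ‖b‖ := mul_le_of_le_one_left (norm_nonneg b) hw
    exact this.not_gt hab

lemma norm_lt_norm_iff_ne_zero_and_norm_div_lt_one {𝕜 : Type*} [NormedDivisionRing 𝕜]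
    {a b : 𝕜} : ‖b‖ < ‖a‖ ↔ a ≠ 0 ∧ ‖b / a‖ < 1 := by
  refine ⟨fun h => ?_, fun ⟨ha, h⟩ => ?_⟩
  · have ha : a ≠ 0 := norm_pos_iff.mp ((norm_nonneg b).trans_lt h)
    exact ⟨ha, by rwa [norm_div, div_lt_one (norm_pos_iff.mpr ha)]⟩
  · rwa [norm_div, div_lt_one (norm_pos_iff.mpr ha)] at h

lemma Fin.forall_snoc_iff {α : Type*} {n : ℕ} (p : α → Prop) (P : (Fin (n + 1) → α) → Prop) :
    (∀ z : Fin (n + 1) → α, (∀ j, p (z j)) → P z) ↔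
      ∀ z' : Fin n → α, (∀ j, p (z' j)) → ∀ w, p w → P (Fin.snoc z' w) := by
  refine ⟨fun h z' hz' w hw => h _ ?_, fun h z hz => ?_⟩
  · simpa only [Fin.forall_fin_succ', Fin.snoc_castSucc, Fin.snoc_last] using ⟨hz', hw⟩
  · rw [← Fin.snoc_init_self z]
    exact h _ (fun j => hz _) _ (hz _)

lemma setOf_forall_norm_le_one_eq_closedBall {ι E : Type*} [Fintype ι] [SeminormedAddCommGroup E] :
    {z : ι → E | ∀ j, ‖z j‖ ≤ 1} = Metric.closedBall 0 1 := by
  ext z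
  rw [mem_closedBall_zero_iff, pi_norm_le_iff_of_nonneg zero_le_one]
  rfl

lemma mem_idxSet_iff {s : ℕ} {r : Fin s → ℕ} {a : Fin s → ℕ} :
    a ∈ idxSet s r ↔ a ≠ 0 ∧ ∀ j, a j ≤ r j := by
  simp [idxSet, Fintype.mem_piFinset]

noncomputable def idxExt {s : ℕ} {r : Fin s → ℕ} (x : idxSet s r → ℂ) (a : Fin s → ℕ) : ℂ :=
  if h : a ∈ idxSet s r then x ⟨a, h⟩ else 0

lemma idxExt_coe {s : ℕ} {r : Fin s → ℕ} (x : idxSet s r → ℂ) (α : idxSet s r) :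
    idxExt x α = x α := by
  simp [idxExt]

noncomputable def signedMonomial {s : ℕ} (a : Fin s → ℕ) (z : Fin s → ℂ) : ℂ :=
  (-1) ^ (∑ j, a j) * ∏ j, z j ^ a j

lemma signedMonomial_snoc {s : ℕ} (a : Fin (s + 1) → ℕ) (z' : Fin s → ℂ) (w : ℂ) :
    signedMonomial a (Fin.snoc z' w) = (-w) ^ a (Fin.last s) * signedMonomial (Fin.init a) z' := by
  simp only [signedMonomial, Fin.sum_univ_castSucc, Fin.prod_univ_castSucc, Fin.snoc_castSucc,
    Fin.snoc_last, Fin.init]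
  ring

lemma tetraR_eq_sum {s : ℕ} {r : Fin s → ℕ} (x : idxSet s r → ℂ) (z : Fin s → ℂ) :
    tetraR s r x z = 1 + ∑ a ∈ idxSet s r, idxExt x a * signedMonomial a z := by
  rw [tetraR, ← Finset.sum_coe_sort (idxSet s r)]
  congr 1
  refine Finset.sum_congr rfl fun α _ => ?_
  rw [idxExt_coe, signedMonomial]
  ring

lemma continuous_tetraR (s : ℕ) (r : Fin s → ℕ) (x : idxSet s r → ℂ) :
    Continuous (tetraR s r x) := by
  unfold tetraR
  fun_prop

section LastVariable

variable {s' : ℕ} {r : Fin (s' + 1) → ℕ}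

lemma snoc_zero_mem_idxSet_iff {a' : Fin s' → ℕ} :
    Fin.snoc a' 0 ∈ idxSet (s' + 1) r ↔
      a' ∈ idxSet s' (fun j => r (Fin.castLE (Nat.le_succ s') j)) := by
  simp only [mem_idxSet_iff, Ne, funext_iff, Fin.forall_fin_succ', Fin.snoc_castSucc,
    Fin.snoc_last, Pi.zero_apply, zero_le, and_true]
  rfl

lemma idxExt_tetraLower (x : idxSet (s' + 1) r → ℂ) (a' : Fin s' → ℕ) :
    idxExt (tetraLower s' r x) a' = idxExt x (Fin.snoc a' 0) := by
  by_cases h : a' ∈ idxSet s' (fun j => r (Fin.castLE (Nat.le_succ s') j))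
  · rw [idxExt, dif_pos h]
    rfl
  · rw [idxExt, idxExt, dif_neg h, dif_neg (snoc_zero_mem_idxSet_iff.not.mpr h)]

lemma sum_filter_idxSet_last_eq_zero {M : Type*} [AddCommMonoid M]
    (F : (Fin (s' + 1) → ℕ) → M) :
    ∑ a ∈ idxSet (s' + 1) r with a (Fin.last s') = 0, F a =
      ∑ a' ∈ idxSet s' (fun j => r (Fin.castLE (Nat.le_succ s') j)), F (Fin.snoc a' 0) := by
  have snoc_init {a : Fin (s' + 1) → ℕ} (ha : a (Fin.last s') = 0) :
      Fin.snoc (Fin.init a) 0 = a :=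
    ha ▸ Fin.snoc_init_self a
  refine Finset.sum_nbij' Fin.init (Fin.snoc · 0) (fun a ha => ?_) (fun a' ha' => ?_)
    (fun a ha => ?_) (fun a' _ => Fin.init_snoc ..) (fun a ha => ?_)
  · rw [mem_filter] at ha
    rw [← snoc_zero_mem_idxSet_iff, snoc_init ha.2]
    exact ha.1
  · exact mem_filter.mpr ⟨snoc_zero_mem_idxSet_iff.mpr ha', Fin.snoc_last ..⟩
  · exact snoc_init (mem_filter.mp ha).2
  · rw [snoc_init (mem_filter.mp ha).2]

lemma tetraP_eq_sum (x : idxSet (s' + 1) r → ℂ) (z' : Fin s' → ℂ) :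
    tetraP s' r x z' = ∑ a ∈ idxSet (s' + 1) r,
      if a (Fin.last s') = 1 then idxExt x a * signedMonomial (Fin.init a) z' else 0 := by
  rw [tetraP, ← Finset.sum_coe_sort (idxSet (s' + 1) r)]
  refine Finset.sum_congr rfl fun α _ => ?_
  split_ifs
  · rw [idxExt_coe, signedMonomial]
    exact (mul_assoc _ _ _).trans (mul_left_comm _ _ _)
  · rfl

lemma continuous_tetraP (x : idxSet (s' + 1) r → ℂ) : Continuous (tetraP s' r x) := by
  refine continuous_finsetSum _ fun α _ => ?_
  split_ifs <;> fun_prop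

lemma tetraR_snoc (hr : r (Fin.last s') ≤ 1)
    (x : idxSet (s' + 1) r → ℂ) (z' : Fin s' → ℂ) (w : ℂ) :
    tetraR (s' + 1) r x (Fin.snoc z' w) =
      tetraR s' (fun j => r (Fin.castLE (Nat.le_succ s') j)) (tetraLower s' r x) z' -
        w * tetraP s' r x z' := by
  have hterm : ∀ a ∈ idxSet (s' + 1) r, idxExt x a * signedMonomial a (Fin.snoc z' w) =
      (if a (Fin.last s') = 0 then idxExt x a * signedMonomial (Fin.init a) z' else 0) -
        w * (if a (Fin.last s') = 1 then idxExt x a * signedMonomial (Fin.init a) z' else 0) := by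
    intro a ha
    have hle : a (Fin.last s') ≤ 1 := ((mem_idxSet_iff.mp ha).2 _).trans hr
    rw [signedMonomial_snoc]
    interval_cases a (Fin.last s')
    · rw [if_pos rfl, if_neg zero_ne_one]
      ring
    · rw [if_neg one_ne_zero, if_pos rfl]
      ring
  rw [tetraR_eq_sum, sum_congr rfl hterm, sum_sub_distrib, ← mul_sum, ← sum_filter,
    ← tetraP_eq_sum, sum_filter_idxSet_last_eq_zero, tetraR_eq_sum, add_sub_assoc]
  simp only [Fin.init_snoc, idxExt_tetraLower]

end LastVariable

theorem genTetrablock_mem_iff_sup_lt_one_general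
    (s' : ℕ) (r : Fin (s' + 1) → ℕ)
    (hlast : r (Fin.last s') = 1) (x : idxSet (s' + 1) r → ℂ) :
    x ∈ genTetrablock (s' + 1) r ↔
      (tetraLower s' r x ∈ genTetrablock s' (fun j => r (Fin.castLE (Nat.le_succ s') j)) ∧
        sSup {t : ℝ | ∃ z' : Fin s' → ℂ, (∀ j, ‖z' j‖ ≤ 1) ∧
          t = ‖tetraP s' r x z' /
            tetraR s' (fun j => r (Fin.castLE (Nat.le_succ s') j)) (tetraLower s' r x) z'‖}
          < 1) := by
  set R' := tetraR s' (fun j => r (Fin.castLE (Nat.le_succ s') j)) (tetraLower s' r x)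
  set D := {z' : Fin s' → ℂ | ∀ j, ‖z' j‖ ≤ 1}
  have hD : IsCompact D := by
    simp only [D, setOf_forall_norm_le_one_eq_closedBall]
    exact isCompact_closedBall 0 1
  have hmem : x ∈ genTetrablock (s' + 1) r ↔
      (∀ z' ∈ D, R' z' ≠ 0) ∧ ∀ z' ∈ D, ‖tetraP s' r x z' / R' z'‖ < 1 := by
    simp only [genTetrablock, Set.mem_ofPred_eq, Fin.forall_snoc_iff (‖·‖ ≤ 1),
      tetraR_snoc hlast.le, forall_norm_le_one_sub_mul_ne_zero_iff, norm_lt_norm_iff_ne_zero_and_norm_div_lt_one]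
    exact forall₂_and
  rw [hmem]
  refine and_congr_right fun hR' => ?_
  have hcont : ContinuousOn (fun z' => ‖tetraP s' r x z' / R' z'‖) D :=
    ((continuous_tetraP x).continuousOn.div (continuous_tetraR _ _ _).continuousOn hR').norm
  have himage : {t : ℝ | ∃ z' : Fin s' → ℂ, (∀ j, ‖z' j‖ ≤ 1) ∧ t = ‖tetraP s' r x z' / R' z'‖} =
      (fun z' => ‖tetraP s' r x z' / R' z'‖) '' D := by
    ext t
    simp only [Set.mem_ofPred_eq, Set.mem_image, eq_comm (a := t)]
    rfl
  rw [himage]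
  exact (hD.sSup_lt_iff_of_continuous ⟨0, fun j => by simp⟩ hcont 1).symm

/-- For `s ≥ 2` and `r_s = 1`: `x ∈ 𝔼_E` iff `x' ∈ 𝔼_{E'}` and
`sup_{z' ∈ 𝔻̄^{s−1}} |P_{x''}(z')/R'_{x'}(z')| < 1`. -/
theorem genTetrablock_mem_iff_sup_lt_one
    (n s' : ℕ) (hn : 2 ≤ n) (hs : s' + 1 ≤ n) (hs' : 1 ≤ s')
    (r : Fin (s' + 1) → ℕ) (hr : ∀ j, 1 ≤ r j) (hsum : ∑ j, r j = n)
    (hlast : r (Fin.last s') = 1) (x : idxSet (s' + 1) r → ℂ) :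
    x ∈ genTetrablock (s' + 1) r ↔
      (tetraLower s' r x ∈ genTetrablock s' (fun j => r (Fin.castLE (Nat.le_succ s') j)) ∧
        sSup {t : ℝ | ∃ z' : Fin s' → ℂ, (∀ j, ‖z' j‖ ≤ 1) ∧
          t = ‖tetraP s' r x z' /
            tetraR s' (fun j => r (Fin.castLE (Nat.le_succ s') j)) (tetraLower s' r x) z'‖}
          < 1) :=
  genTetrablock_mem_iff_sup_lt_one_general s' r hlast x
end

section
/- Let s ≥ 2, r₂ = … = r_s = 1. For x ∈ ℂ^N, the following are equivalent: (i) R_x(z) ≠ 0 for all z in the open polydisc 𝔻^s; (ii) x belongs to the closure of the generalized tetrablock 𝔼_E. -/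
/-
If `R_x` has no zero in the open polydisc, then the dilations `x_λ = m_λ.x`, `|λ| < 1`, lie in
`𝔼_E` because `R_{x_λ}(z) = R_x(λz)`, and `x_λ → x` as `λ → 1`.
Conversely, fix `z` in the open polydisc and let `‖z‖` be its sup norm. For `y ∈ 𝔼_E`, the
one-variable polynomial `t ↦ R_y(t z/‖z‖)` equals `1` at `0`, has degree at most `N' = Σ r_j`,
and has all its roots outside the open unit disc; factoring it over its roots gives
`(1 - ‖z‖)^N' ≤ |R_y(z)|`. This lower bound is uniform in `y`, so it passes to the closure.
-/

open Set Finset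

open Polynomial

namespace Polynomial

theorem one_sub_norm_pow_natDegree_le_norm_eval (p : ℂ[X]) (h0 : p.eval 0 = 1)
    (hp : ∀ a : ℂ, ‖a‖ < 1 → p.eval a ≠ 0) {t : ℂ} (ht : ‖t‖ ≤ 1) :
    (1 - ‖t‖) ^ p.natDegree ≤ ‖p.eval t‖ := by
  have hsplit : Splits p := IsAlgClosed.splits p
  have hnorm (u : ℂ) : ‖p.eval u‖ = ‖p.leadingCoeff‖ * (p.roots.map (‖u - ·‖)).prod := by
    rw [hsplit.eval_eq_prod_roots, norm_mul]
    exact congrArg _ <| (map_multiset_prod (normHom (α := ℂ)) _).trans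
      (congrArg _ (Multiset.map_map _ _ _))
  have hroot : ∀ a ∈ p.roots, 1 ≤ ‖a‖ := fun a ha =>
    not_lt.mp fun h => hp a h (mem_roots'.mp ha).2
  -- `(1 - ‖t‖) ‖a‖ ≤ ‖a‖ - ‖t‖ ≤ ‖t - a‖` because `‖a‖ ≥ 1`
  have hfactor : ∀ a ∈ p.roots, (1 - ‖t‖) * ‖0 - a‖ ≤ ‖t - a‖ := fun a ha => by
    have := norm_sub_norm_le a t
    rw [zero_sub, norm_neg, norm_sub_rev a t] at *
    nlinarith [hroot a ha, norm_nonneg t]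
  calc (1 - ‖t‖) ^ p.natDegree
      ≤ (1 - ‖t‖) ^ Multiset.card p.roots :=
        pow_le_pow_of_le_one (by linarith) (by linarith [norm_nonneg t]) (card_roots' p)
    _ = (1 - ‖t‖) ^ Multiset.card p.roots * ‖p.eval 0‖ := by rw [h0, norm_one, mul_one]
    _ = ‖p.leadingCoeff‖ * (p.roots.map fun a => (1 - ‖t‖) * ‖0 - a‖).prod := by
        rw [hnorm, Multiset.prod_map_mul, Multiset.map_const', Multiset.prod_replicate]
        ring
    _ ≤ ‖p.eval t‖ := by
        rw [hnorm]
        gcongr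
        exact Multiset.prod_map_le_prod_map₀ _ _
          (fun a ha => mul_nonneg (by linarith) (norm_nonneg _)) hfactor

end Polynomial

variable {s : ℕ} {r : Fin s → ℕ}

theorem idxSet.sum_pos (α : idxSet s r) : 0 < ∑ j, (α : Fin s → ℕ) j := by
  obtain ⟨α, hα⟩ := α
  refine Nat.pos_of_ne_zero fun h => (Finset.mem_erase.mp hα).1 ?_
  exact funext fun j => Finset.sum_eq_zero_iff.mp h j (Finset.mem_univ j)

theorem idxSet.sum_le (α : idxSet s r) : ∑ j, (α : Fin s → ℕ) j ≤ ∑ j, r j := by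
  obtain ⟨α, hα⟩ := α
  rw [idxSet, Finset.mem_erase, Fintype.mem_piFinset] at hα
  exact Finset.sum_le_sum fun j _ => Nat.lt_succ_iff.mp (Finset.mem_range.mp (hα.2 j))

theorem tetraR_smul (x : idxSet s r → ℂ) (c : ℂ) (z : Fin s → ℂ) :
    tetraR s r x (c • z) = 1 + ∑ α : idxSet s r,
      (-1 : ℂ) ^ (∑ j, (α : Fin s → ℕ) j) * x α * (∏ j, z j ^ (α : Fin s → ℕ) j) *
        c ^ (∑ j, (α : Fin s → ℕ) j) := by
  unfold tetraR
  congr 1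
  refine Finset.sum_congr rfl fun α _ => ?_
  simp only [Pi.smul_apply, smul_eq_mul, mul_pow, Finset.prod_mul_distrib,
    Finset.prod_pow_eq_pow_sum]
  ring

theorem tetraR_zero (x : idxSet s r → ℂ) : tetraR s r x 0 = 1 := by
  rw [← zero_smul ℂ (0 : Fin s → ℂ), tetraR_smul]
  simp [zero_pow (idxSet.sum_pos _).ne']

theorem continuous_tetraR_left (z : Fin s → ℂ) :
    Continuous fun x : idxSet s r → ℂ => tetraR s r x z := by
  unfold tetraR
  fun_prop

/-- The dilation `m_c.x` of the paper. -/
noncomputable def tetraDilate (c : ℂ) (x : idxSet s r → ℂ) (α : idxSet s r) : ℂ :=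
  c ^ (∑ j, (α : Fin s → ℕ) j) * x α

theorem tetraDilate_one (x : idxSet s r → ℂ) : tetraDilate 1 x = x :=
  funext fun α => by simp [tetraDilate]

theorem continuous_tetraDilate (x : idxSet s r → ℂ) :
    Continuous fun c : ℂ => tetraDilate c x := by
  unfold tetraDilate
  fun_prop

theorem tetraR_tetraDilate (c : ℂ) (x : idxSet s r → ℂ) (z : Fin s → ℂ) :
    tetraR s r (tetraDilate c x) z = tetraR s r x (c • z) := by
  rw [tetraR_smul, tetraR]
  congr 1
  refine Finset.sum_congr rfl fun α _ => ?_
  rw [tetraDilate]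
  ring

noncomputable def tetraLine (y : idxSet s r → ℂ) (z : Fin s → ℂ) : ℂ[X] :=
  1 + ∑ α : idxSet s r, C ((-1 : ℂ) ^ (∑ j, (α : Fin s → ℕ) j) * y α *
    ∏ j, z j ^ (α : Fin s → ℕ) j) * X ^ (∑ j, (α : Fin s → ℕ) j)

theorem eval_tetraLine (y : idxSet s r → ℂ) (z : Fin s → ℂ) (t : ℂ) :
    (tetraLine y z).eval t = tetraR s r y (t • z) := by
  simp [tetraLine, tetraR_smul, eval_finsetSum, eval_prod]

theorem natDegree_tetraLine_le (y : idxSet s r → ℂ) (z : Fin s → ℂ) :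
    (tetraLine y z).natDegree ≤ ∑ j, r j := by
  refine (natDegree_add_le _ _).trans (max_le (by simp) ?_)
  refine natDegree_sum_le_of_forall_le _ _ fun α _ => ?_
  exact natDegree_C_mul_X_pow_le _ _ |>.trans (idxSet.sum_le α)

theorem one_sub_norm_pow_le_norm_tetraR {y : idxSet s r → ℂ} (hy : y ∈ genTetrablock s r)
    {z : Fin s → ℂ} (hz : ‖z‖ ≤ 1) : (1 - ‖z‖) ^ (∑ j, r j) ≤ ‖tetraR s r y z‖ := by
  set w : Fin s → ℂ := (‖z‖ : ℂ)⁻¹ • z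
  have hw : ∀ j, ‖w j‖ ≤ 1 := fun j =>
    (norm_le_pi_norm w j).trans <| by
      rw [norm_smul, norm_inv, Complex.norm_real, norm_norm]
      exact inv_mul_le_one
  have hzw : (‖z‖ : ℂ) • w = z := by
    rcases eq_or_ne ‖z‖ 0 with h | h
    · simp [norm_eq_zero.mp h]
    · exact smul_inv_smul₀ (by exact_mod_cast h) z
  have hline := (tetraLine y w).one_sub_norm_pow_natDegree_le_norm_eval
    (by rw [eval_tetraLine, zero_smul, tetraR_zero])
    (fun a ha => by
      rw [eval_tetraLine]
      refine hy _ fun j => ?_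
      rw [Pi.smul_apply, norm_smul]
      exact mul_le_one₀ ha.le (norm_nonneg _) (hw j))
    (t := ‖z‖) (by simpa using hz)
  rw [eval_tetraLine, hzw, Complex.norm_real, norm_norm] at hline
  exact (pow_le_pow_of_le_one (by linarith) (by linarith [norm_nonneg z])
    (natDegree_tetraLine_le y w)).trans hline

theorem mem_closure_genTetrablock_iff_general
    (s : ℕ) (r : Fin s → ℕ) (x : idxSet s r → ℂ) :
    (∀ z : Fin s → ℂ, (∀ j, ‖z j‖ < 1) → tetraR s r x z ≠ 0) ↔
      x ∈ closure (genTetrablock s r) := by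
  constructor
  · intro hx
    have hdilate : MapsTo (tetraDilate · x) (Metric.ball 0 1) (genTetrablock s r) :=
      fun c hc z hz => by
        dsimp only
        rw [tetraR_tetraDilate]
        refine hx _ fun j => ?_
        rw [Pi.smul_apply, norm_smul]
        exact mul_lt_one_of_nonneg_of_lt_one_left (norm_nonneg c) (mem_ball_zero_iff.mp hc)
          (hz j)
    have hone : (1 : ℂ) ∈ closure (Metric.ball 0 1) := by
      rw [closure_ball _ one_ne_zero]
      simp
    simpa only [tetraDilate_one] using map_mem_closure (continuous_tetraDilate x) hone hdilate
  · intro hx z hz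
    rw [← pi_norm_lt_iff zero_lt_one] at hz
    have hbound :
        closure (genTetrablock s r) ⊆ {y | (1 - ‖z‖) ^ (∑ j, r j) ≤ ‖tetraR s r y z‖} :=
      closure_minimal (fun y hy => one_sub_norm_pow_le_norm_tetraR hy hz.le)
        (isClosed_le continuous_const (continuous_tetraR_left z).norm)
    exact norm_ne_zero_iff.mp ((pow_pos (by linarith) _).trans_le (hbound hx)).ne'

/-- For the block structure `(r₁, 1, …, 1)`: `x` lies in the closure of `𝔼_E` iff
`R_x(z) ≠ 0` for all `z` in the open polydisc `𝔻^s`. -/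
theorem mem_closure_genTetrablock_iff
    (n s : ℕ) (hn : 2 ≤ n) (hs : s ≤ n) (hs2 : 2 ≤ s)
    (r : Fin s → ℕ) (hr : ∀ j, 1 ≤ r j) (hsum : ∑ j, r j = n)
    (htail : ∀ j : Fin s, 0 < (j : ℕ) → r j = 1)
    (x : idxSet s r → ℂ) :
    (∀ z : Fin s → ℂ, (∀ j, ‖z j‖ < 1) → tetraR s r x z ≠ 0) ↔
      x ∈ closure (genTetrablock s r) :=
  mem_closure_genTetrablock_iff_general s r x
end

section
/- If r₂ = … = r_s = 1, then the generalized tetrablock 𝔼_E is linearly convex, i.e., its complement in ℂ^N is a union of affine complex hyperplanes: for every x₀ ∉ 𝔼_E there exists an affine complex hyperplane H with x₀ ∈ H and H ∩ 𝔼_E = ∅. -/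
open Set Finset

/-- For the block structure `(r₁, 1, …, 1)`, the generalized tetrablock is linearly
convex: for every `x₀ ∉ 𝔼_E` there is an affine complex hyperplane through `x₀`
disjoint from `𝔼_E`. -/
theorem genTetrablock_linearly_convex
    (n s : ℕ) (hn : 2 ≤ n) (hs : s ≤ n)
    (r : Fin s → ℕ) (hr : ∀ j, 1 ≤ r j) (hsum : ∑ j, r j = n)
    (htail : ∀ j : Fin s, 0 < (j : ℕ) → r j = 1) :
    ∀ x₀ : idxSet s r → ℂ, x₀ ∉ genTetrablock s r →
      ∃ (f : (idxSet s r → ℂ) →ₗ[ℂ] ℂ) (c : ℂ), f ≠ 0 ∧ f x₀ = c ∧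
        ∀ x ∈ genTetrablock s r, f x ≠ c := by
  intro x₀ hx₀
  simp only [genTetrablock, Set.mem_setOf_eq, not_forall, not_ne_iff] at hx₀
  obtain ⟨z, hz, hzero⟩ := hx₀
  set f : (idxSet s r → ℂ) →ₗ[ℂ] ℂ :=
    { toFun := fun x => ∑ α : idxSet s r,
        (-1 : ℂ) ^ (∑ j, (α : Fin s → ℕ) j) * x α * ∏ j, z j ^ (α : Fin s → ℕ) j
      map_add' := by
        intro a b
        simp only [Pi.add_apply]
        rw [← Finset.sum_add_distrib]
        congr 1; ext α; ring
      map_smul' := by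
        intro m a
        simp only [Pi.smul_apply, smul_eq_mul, RingHom.id_apply, Finset.mul_sum]
        congr 1; ext α; ring } with hf
  have hRx : ∀ x : idxSet s r → ℂ, tetraR s r x z = 1 + f x := fun x => rfl
  have hfx₀ : f x₀ = -1 := by
    have := hzero
    rw [hRx x₀] at this
    linear_combination this
  refine ⟨f, -1, ?_, hfx₀, ?_⟩
  · intro h
    rw [h] at hfx₀
    simp at hfx₀
  · intro x hx
    have hne := hx z hz
    rw [hRx x] at hne
    intro hc
    exact hne (by rw [hc]; ring)
end

section
/- If r₂ = … = r_s = 1, then the m-Minkowski functional 𝔥_{𝔼_E} of the generalized tetrablock, where m = (|α^1|,…,|α^N|), is continuous on ℂ^N; consequently the boundary of 𝔼_E is contained in { x : 𝔥_{𝔼_E}(x) = 1 }. -/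
open Set Finset
open Polynomial

/-- The `m`-Minkowski functional of the generalized tetrablock, `m = (|α^1|,…,|α^N|)`:
`𝔥(x) = inf{ t > 0 : m_{1/t}.x ∈ 𝔼_E }`. -/
noncomputable def tetraMinkowski (s : ℕ) (r : Fin s → ℕ) (x : idxSet s r → ℂ) : ℝ :=
  sInf {t : ℝ | 0 < t ∧
    (fun α : idxSet s r => ((t⁻¹ : ℝ) : ℂ) ^ (∑ j, (α : Fin s → ℕ) j) * x α)
      ∈ genTetrablock s r}

namespace TetraAux

variable {s : ℕ} {r : Fin s → ℕ}

/-- the total degree `|α|` of a multi-index -/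
def deg (α : idxSet s r) : ℕ := ∑ j, (α : Fin s → ℕ) j

lemma exists_coord_ne (α : idxSet s r) : ∃ j, (α : Fin s → ℕ) j ≠ 0 := by
  have h := α.2
  simp only [idxSet, Finset.mem_erase] at h
  by_contra hc
  push_neg at hc
  exact h.1 (funext hc)

lemma one_le_deg (α : idxSet s r) : 1 ≤ deg α := by
  obtain ⟨j, hj⟩ := exists_coord_ne α
  calc 1 ≤ (α : Fin s → ℕ) j := Nat.one_le_iff_ne_zero.2 hj
    _ ≤ deg α := Finset.single_le_sum (fun i _ => Nat.zero_le _) (Finset.mem_univ j)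

lemma deg_ne_zero (α : idxSet s r) : deg α ≠ 0 := Nat.one_le_iff_ne_zero.1 (one_le_deg α)

/-- uniform bound on the degrees -/
def degBound (s : ℕ) (r : Fin s → ℕ) : ℕ := ∑ α : idxSet s r, deg α

lemma deg_le_degBound (α : idxSet s r) : deg α ≤ degBound s r :=
  Finset.single_le_sum (f := fun α : idxSet s r => deg α)
    (fun i _ => Nat.zero_le _) (Finset.mem_univ α)

lemma tetraR_apply (x : idxSet s r → ℂ) (z : Fin s → ℂ) :
    tetraR s r x z = 1 + ∑ α : idxSet s r, (-1 : ℂ) ^ deg α * x α *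
      ∏ j, z j ^ (α : Fin s → ℕ) j := rfl

/-- `R_x(0) = 1`. -/
lemma tetraR_zero_z (x : idxSet s r → ℂ) : tetraR s r x (fun _ => 0) = 1 := by
  rw [tetraR_apply]
  have : ∀ α ∈ (Finset.univ : Finset (idxSet s r)),
      (-1 : ℂ) ^ deg α * x α * ∏ j, (0 : ℂ) ^ (α : Fin s → ℕ) j = 0 := by
    intro α _
    obtain ⟨j, hj⟩ := exists_coord_ne α
    rw [Finset.prod_eq_zero (Finset.mem_univ j) (zero_pow hj), mul_zero]
  rw [Finset.sum_eq_zero this, add_zero]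

/-- `R_0(z) = 1`. -/
lemma tetraR_zero_x (z : Fin s → ℂ) : tetraR s r (fun _ => 0) z = 1 := by
  rw [tetraR_apply]
  simp

/-- difference estimate -/
lemma abs_tetraR_sub (x x' : idxSet s r → ℂ) (z : Fin s → ℂ) :
    ‖tetraR s r x' z - tetraR s r x z‖ ≤
      ∑ α : idxSet s r, ‖x' α - x α‖ * ∏ j, ‖z j‖ ^ (α : Fin s → ℕ) j := by
  have hdiff : tetraR s r x' z - tetraR s r x z
      = ∑ α : idxSet s r, (-1 : ℂ) ^ deg α * (x' α - x α) * ∏ j, z j ^ (α : Fin s → ℕ) j := by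
    rw [tetraR_apply, tetraR_apply, add_sub_add_left_eq_sub, ← Finset.sum_sub_distrib]
    exact Finset.sum_congr rfl fun α _ => by ring
  rw [hdiff]
  refine le_trans (norm_sum_le _ _) (le_of_eq (Finset.sum_congr rfl fun α _ => ?_))
  have habs : ‖(-1 : ℂ)‖ = 1 := by simp
  rw [norm_mul, norm_mul, norm_pow, norm_prod, habs, one_pow, one_mul]
  congr 1
  exact Finset.prod_congr rfl fun j _ => norm_pow _ _

/-- continuity of `z ↦ R_x(z)` -/
lemma continuous_tetraR (x : idxSet s r → ℂ) : Continuous (tetraR s r x) := by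
  refine continuous_const.add (continuous_finset_sum _ fun α _ => continuous_const.mul ?_)
  exact continuous_finset_prod _ fun j _ => (continuous_apply j).pow _

/-- the restriction of `R_{x}` to the line `w ↦ w • z₀`, as a one-variable polynomial -/
noncomputable def linePoly (x : idxSet s r → ℂ) (z₀ : Fin s → ℂ) : Polynomial ℂ :=
  Polynomial.C 1 + ∑ α : idxSet s r,
    Polynomial.C ((-1 : ℂ) ^ deg α * x α * ∏ j, z₀ j ^ (α : Fin s → ℕ) j) *
      Polynomial.X ^ deg α

lemma eval_linePoly (x : idxSet s r → ℂ) (z₀ : Fin s → ℂ) (w : ℂ) :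
    (linePoly x z₀).eval w = tetraR s r x (fun j => w * z₀ j) := by
  rw [linePoly, tetraR_apply, eval_add, eval_C, Polynomial.eval_finset_sum]
  congr 1
  refine Finset.sum_congr rfl fun α _ => ?_
  rw [eval_mul, eval_C, eval_pow, eval_X]
  have : ∏ j, (w * z₀ j) ^ (α : Fin s → ℕ) j
      = w ^ deg α * ∏ j, z₀ j ^ (α : Fin s → ℕ) j := by
    rw [deg, ← Finset.prod_pow_eq_pow_sum, ← Finset.prod_mul_distrib]
    exact Finset.prod_congr rfl fun j _ => mul_pow _ _ _
  rw [this]; ring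

lemma eval_one_linePoly (x : idxSet s r → ℂ) (z₀ : Fin s → ℂ) :
    (linePoly x z₀).eval 1 = tetraR s r x z₀ := by
  rw [eval_linePoly]
  congr 1
  funext j
  rw [one_mul]

lemma linePoly_coeff_zero (x : idxSet s r → ℂ) (z₀ : Fin s → ℂ) :
    (linePoly x z₀).coeff 0 = 1 := by
  rw [linePoly, Polynomial.coeff_add, Polynomial.coeff_C, if_pos rfl,
    Polynomial.finset_sum_coeff]
  have : ∀ α ∈ (Finset.univ : Finset (idxSet s r)),
      (Polynomial.C ((-1 : ℂ) ^ deg α * x α * ∏ j, z₀ j ^ (α : Fin s → ℕ) j)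
        * Polynomial.X ^ deg α).coeff 0 = 0 := by
    intro α _
    rw [Polynomial.coeff_C_mul, Polynomial.coeff_X_pow, if_neg (fun h => deg_ne_zero α h.symm),
      mul_zero]
  rw [Finset.sum_eq_zero this, add_zero]

lemma linePoly_natDegree_le (x : idxSet s r → ℂ) (z₀ : Fin s → ℂ) :
    (linePoly x z₀).natDegree ≤ degBound s r := by
  refine le_trans (Polynomial.natDegree_add_le _ _) ?_
  rw [Polynomial.natDegree_C, max_eq_right (Nat.zero_le _)]
  refine Polynomial.natDegree_sum_le_of_forall_le _ _ fun α _ => ?_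
  refine le_trans (Polynomial.natDegree_C_mul_le _ _) ?_
  rw [Polynomial.natDegree_X_pow]
  exact deg_le_degBound α

lemma linePoly_ne_zero (x : idxSet s r → ℂ) (z₀ : Fin s → ℂ) : linePoly x z₀ ≠ 0 := by
  intro h
  have := linePoly_coeff_zero x z₀
  rw [h, Polynomial.coeff_zero] at this
  exact one_ne_zero this.symm

end TetraAux

namespace TetraAux

variable {s : ℕ} {r : Fin s → ℕ}

lemma multiset_prod_bound (B : ℝ) (hB : 1 < B) (m : Multiset ℂ)
    (h : ∀ a ∈ m, B < ‖a‖) :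
    (1 - B⁻¹) ^ (Multiset.card m) * (m.map fun a => ‖a‖).prod
      ≤ (m.map fun a => ‖1 - a‖).prod := by
  have hB0 : (0 : ℝ) < B := lt_trans one_pos hB
  have hbase : (0 : ℝ) ≤ 1 - B⁻¹ := by
    rw [sub_nonneg]
    exact le_of_lt (inv_lt_one_of_one_lt₀ hB)
  induction m using Multiset.induction with
  | empty => simp
  | cons a t ih =>
    have hat : B < ‖a‖ := h a (Multiset.mem_cons_self a t)
    have iht := ih (fun b hb => h b (Multiset.mem_cons_of_mem hb))
    simp only [Multiset.map_cons, Multiset.prod_cons, Multiset.card_cons, pow_succ]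
    have key : (1 - B⁻¹) * ‖a‖ ≤ ‖1 - a‖ := by
      have h1 : ‖a‖ - 1 ≤ ‖1 - a‖ := by
        have h' := abs_norm_sub_norm_le 1 a
        simp only [norm_one] at h'
        have h'' : -(1 - ‖a‖) ≤ |1 - ‖a‖| := neg_le_abs _
        linarith
      have h2 : (1 - B⁻¹) * ‖a‖ = ‖a‖ - B⁻¹ * ‖a‖ := by ring
      have h3 : (1 : ℝ) ≤ B⁻¹ * ‖a‖ := by
        have h4 : B⁻¹ * B ≤ B⁻¹ * ‖a‖ :=
          mul_le_mul_of_nonneg_left hat.le (inv_pos.2 hB0).le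
        rwa [inv_mul_cancel₀ (ne_of_gt hB0)] at h4
      have : ‖a‖ - B⁻¹ * ‖a‖ ≤ ‖a‖ - 1 := by linarith
      rw [h2]; linarith
    have hprod_nonneg : (0:ℝ) ≤ (Multiset.map (fun a => ‖a‖) t).prod := by
      refine Multiset.prod_nonneg fun b hb => ?_
      obtain ⟨c, _, rfl⟩ := Multiset.mem_map.1 hb
      exact norm_nonneg c
    calc (1 - B⁻¹) ^ Multiset.card t * (1 - B⁻¹) *
          (‖a‖ * (Multiset.map (fun a => ‖a‖) t).prod)
        = ((1 - B⁻¹) * ‖a‖) *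
          ((1 - B⁻¹) ^ Multiset.card t * (Multiset.map (fun a => ‖a‖) t).prod) := by ring
      _ ≤ ‖1 - a‖ * (Multiset.map (fun a => ‖1 - a‖) t).prod := by
          refine mul_le_mul key iht (mul_nonneg (pow_nonneg hbase _) hprod_nonneg)
            (norm_nonneg _)

/-- If all roots of `p` have modulus `> B > 1` and `p(0) = 1`, then `|p(1)| ≥ (1-1/B)^deg p`. -/
lemma abs_eval_one_lower (p : Polynomial ℂ) (h0 : p.coeff 0 = 1) (B : ℝ) (hB : 1 < B)
    (hroots : ∀ β ∈ p.roots, B < ‖β‖) :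
    (1 - B⁻¹) ^ p.natDegree ≤ ‖p.eval 1‖ := by
  have hp0 : p ≠ 0 := by intro h; rw [h, Polynomial.coeff_zero] at h0; exact one_ne_zero h0.symm
  have hsplit : p.Splits := IsAlgClosed.splits p
  have hfact := hsplit.eq_prod_roots
  have hcard : p.natDegree = Multiset.card p.roots := by
    exact hsplit.natDegree_eq_card_roots
  have hprodval : ∀ c : ℂ, ‖p.eval c‖
      = ‖p.leadingCoeff‖ * (p.roots.map fun a => ‖c - a‖).prod := by
    intro c
    conv_lhs => rw [hfact]
    have hnm : ∀ m : Multiset ℂ, ‖m.prod‖ = (m.map fun a => ‖a‖).prod := fun m => by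
      induction m using Multiset.induction <;> simp [*]
    rw [Polynomial.eval_mul, Polynomial.eval_C, Polynomial.eval_multiset_prod, norm_mul,
      hnm, Multiset.map_map, Multiset.map_map]
    congr 2
    refine Multiset.map_congr rfl fun a _ => ?_
    simp
  have h₀ : ‖p.leadingCoeff‖ * (p.roots.map fun a => ‖a‖).prod = 1 := by
    have e1 : (p.roots.map fun a => ‖0 - a‖).prod
        = (p.roots.map fun a => ‖a‖).prod := by
      refine congrArg _ (Multiset.map_congr rfl fun a _ => ?_)
      simp
    have e2 := hprodval 0
    rw [← Polynomial.coeff_zero_eq_eval_zero, h0, norm_one, e1] at e2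
    exact e2.symm
  have hmb := multiset_prod_bound B hB p.roots hroots
  have hlc : (0:ℝ) ≤ ‖p.leadingCoeff‖ := norm_nonneg _
  calc (1 - B⁻¹) ^ p.natDegree
      = (1 - B⁻¹) ^ Multiset.card p.roots *
          (‖p.leadingCoeff‖ * (p.roots.map fun a => ‖a‖).prod) := by
        rw [h₀, mul_one, hcard]
    _ = ‖p.leadingCoeff‖ *
          ((1 - B⁻¹) ^ Multiset.card p.roots * (p.roots.map fun a => ‖a‖).prod) := by
        ring
    _ ≤ ‖p.leadingCoeff‖ * (p.roots.map fun a => ‖1 - a‖).prod :=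
        mul_le_mul_of_nonneg_left hmb hlc
    _ = ‖p.eval 1‖ := (hprodval 1).symm

end TetraAux

namespace TetraAux

variable {s : ℕ} {r : Fin s → ℕ}

/-- Key perturbation lemma: a zero of `R_x` inside the polydisc of "radius profile" `z₀`
persists (within radius `ρ`) for all `x'` close to `x`. -/
lemma perturb_root (x : idxSet s r → ℂ) (z₀ : Fin s → ℂ) (hz : tetraR s r x z₀ = 0)
    (ρ B : ℝ) (hρ : 0 < ρ) (hB : 1 < B) (hBz : ∀ j, B * ‖z₀ j‖ ≤ ρ) :
    ∃ δ > 0, ∀ x' : idxSet s r → ℂ, (∀ α, ‖x' α - x α‖ < δ) →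
      ∃ z' : Fin s → ℂ, (∀ j, ‖z' j‖ ≤ ρ) ∧ tetraR s r x' z' = 0 := by
  have hB0 : (0:ℝ) < B := lt_trans one_pos hB
  have hbase : (0:ℝ) < 1 - B⁻¹ := by
    rw [sub_pos]
    exact inv_lt_one_of_one_lt₀ hB
  set C : ℝ := ∑ α : idxSet s r, ∏ j, ‖z₀ j‖ ^ (α : Fin s → ℕ) j with hCdef
  have hC : 0 ≤ C := Finset.sum_nonneg fun α _ =>
    Finset.prod_nonneg fun j _ => pow_nonneg (norm_nonneg _) _
  refine ⟨(1 - B⁻¹) ^ degBound s r / (1 + C), by positivity, fun x' hx' => ?_⟩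
  by_contra hcon
  push_neg at hcon
  -- all roots of the line polynomial are large
  have hroots : ∀ β ∈ (linePoly x' z₀).roots, B < ‖β‖ := by
    intro β hβ
    have hev : tetraR s r x' (fun j => β * z₀ j) = 0 := by
      rw [← eval_linePoly]
      exact ((Polynomial.mem_roots (linePoly_ne_zero x' z₀)).1 hβ)
    by_contra hle
    push_neg at hle
    refine hcon (fun j => β * z₀ j) (fun j => ?_) hev
    rw [norm_mul]
    calc ‖β‖ * ‖z₀ j‖
        ≤ B * ‖z₀ j‖ := mul_le_mul_of_nonneg_right hle (norm_nonneg _)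
      _ ≤ ρ := hBz j
  have hlow := abs_eval_one_lower (linePoly x' z₀) (linePoly_coeff_zero x' z₀) B hB hroots
  have hpow : (1 - B⁻¹) ^ degBound s r ≤ (1 - B⁻¹) ^ (linePoly x' z₀).natDegree :=
    pow_le_pow_of_le_one hbase.le (by linarith [inv_pos.2 hB0]) (linePoly_natDegree_le x' z₀)
  -- upper bound on |R_{x'}(z₀)|
  have hupper : ‖(linePoly x' z₀).eval 1‖ ≤ ((1 - B⁻¹) ^ degBound s r / (1 + C)) * C := by
    rw [eval_one_linePoly]
    have : ‖tetraR s r x' z₀‖ = ‖tetraR s r x' z₀ - tetraR s r x z₀‖ := by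
      rw [hz, sub_zero]
    rw [this]
    refine le_trans (abs_tetraR_sub x x' z₀) ?_
    rw [hCdef, Finset.mul_sum]
    refine Finset.sum_le_sum fun α _ => ?_
    refine mul_le_mul_of_nonneg_right (hx' α).le ?_
    exact Finset.prod_nonneg fun j _ => pow_nonneg (norm_nonneg _) _
  have hlt : ((1 - B⁻¹) ^ degBound s r / (1 + C)) * C < (1 - B⁻¹) ^ degBound s r := by
    rw [div_mul_eq_mul_div, div_lt_iff₀ (by linarith)]
    have hpb : (0:ℝ) < (1 - B⁻¹) ^ degBound s r := pow_pos hbase _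
    nlinarith
  linarith [le_trans hpow hlow]

end TetraAux

namespace TetraAux

variable {s : ℕ} {r : Fin s → ℕ}

/-- The set of scales whose rescaling of `x` lies in the tetrablock. -/
def Sset (s : ℕ) (r : Fin s → ℕ) (x : idxSet s r → ℂ) : Set ℝ :=
  {t : ℝ | 0 < t ∧ ∀ w : Fin s → ℂ, (∀ j, ‖w j‖ ≤ t⁻¹) → tetraR s r x w ≠ 0}

lemma tetraR_smul (c : ℂ) (x : idxSet s r → ℂ) (z : Fin s → ℂ) :
    tetraR s r (fun α => c ^ (∑ j, (α : Fin s → ℕ) j) * x α) z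
      = tetraR s r x (fun j => c * z j) := by
  rw [tetraR_apply, tetraR_apply]
  congr 1
  refine Finset.sum_congr rfl fun α _ => ?_
  have : ∏ j, (c * z j) ^ (α : Fin s → ℕ) j
      = c ^ deg α * ∏ j, z j ^ (α : Fin s → ℕ) j := by
    rw [deg, ← Finset.prod_pow_eq_pow_sum, ← Finset.prod_mul_distrib]
    exact Finset.prod_congr rfl fun j _ => mul_pow _ _ _
  rw [this, deg]
  ring

lemma minkowski_eq (x : idxSet s r → ℂ) :
    tetraMinkowski s r x = sInf (Sset s r x) := by
  rw [tetraMinkowski]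
  congr 1
  ext t
  simp only [Set.mem_setOf_eq, Sset]
  constructor
  · rintro ⟨ht, hmem⟩
    refine ⟨ht, fun w hw => ?_⟩
    have h1 : tetraR s r (fun α => ((t⁻¹ : ℝ) : ℂ) ^ (∑ j, (α : Fin s → ℕ) j) * x α)
        (fun j => (t : ℂ) * w j) ≠ 0 := by
      refine hmem (fun j => (t : ℂ) * w j) fun j => ?_
      rw [norm_mul, Complex.norm_real, Real.norm_eq_abs, abs_of_pos ht]
      calc t * ‖w j‖ ≤ t * t⁻¹ := mul_le_mul_of_nonneg_left (hw j) ht.le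
        _ = 1 := mul_inv_cancel₀ (ne_of_gt ht)
    rw [tetraR_smul] at h1
    have : (fun j => ((t⁻¹ : ℝ) : ℂ) * ((t : ℂ) * w j)) = w := by
      funext j
      rw [← mul_assoc, ← Complex.ofReal_mul, inv_mul_cancel₀ (ne_of_gt ht), Complex.ofReal_one,
        one_mul]
    rwa [this] at h1
  · rintro ⟨ht, hmem⟩
    refine ⟨ht, fun z hz => ?_⟩
    rw [tetraR_smul]
    refine hmem _ fun j => ?_
    rw [norm_mul, Complex.norm_real, Real.norm_eq_abs, abs_of_pos (inv_pos.2 ht)]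
    calc t⁻¹ * ‖z j‖ ≤ t⁻¹ * 1 :=
          mul_le_mul_of_nonneg_left (hz j) (inv_pos.2 ht).le
      _ = t⁻¹ := mul_one _

lemma mem_genTetrablock_iff_one_mem (x : idxSet s r → ℂ) :
    x ∈ genTetrablock s r ↔ (1 : ℝ) ∈ Sset s r x := by
  simp only [genTetrablock, Set.mem_setOf_eq, Sset, inv_one]
  exact ⟨fun h => ⟨one_pos, h⟩, fun h => h.2⟩

lemma Sset_upward {x : idxSet s r → ℂ} {t t' : ℝ} (ht : t ∈ Sset s r x) (htt' : t ≤ t') :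
    t' ∈ Sset s r x := by
  obtain ⟨ht0, hmem⟩ := ht
  refine ⟨lt_of_lt_of_le ht0 htt', fun w hw => hmem w fun j => ?_⟩
  exact le_trans (hw j) (inv_anti₀ ht0 htt')

lemma Sset_nonempty (x : idxSet s r → ℂ) :
    (1 + ∑ α : idxSet s r, ‖x α‖) ∈ Sset s r x := by
  set T : ℝ := 1 + ∑ α : idxSet s r, ‖x α‖ with hT
  have hsum : 0 ≤ ∑ α : idxSet s r, ‖x α‖ :=
    Finset.sum_nonneg fun α _ => norm_nonneg _
  have hT1 : (1:ℝ) ≤ T := by rw [hT]; linarith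
  have hT0 : (0:ℝ) < T := lt_of_lt_of_le one_pos hT1
  refine ⟨hT0, fun w hw h0 => ?_⟩
  have hlt : ‖tetraR s r x w - 1‖ < 1 := by
    have h1 : ‖tetraR s r x w - tetraR s r (fun _ => 0) w‖
        ≤ ∑ α : idxSet s r, ‖x α - 0‖ *
          ∏ j, ‖w j‖ ^ (α : Fin s → ℕ) j := abs_tetraR_sub (fun _ => 0) x w
    rw [tetraR_zero_x] at h1
    have h2 : ∑ α : idxSet s r, ‖x α - 0‖ *
        ∏ j, ‖w j‖ ^ (α : Fin s → ℕ) j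
        ≤ ∑ α : idxSet s r, ‖x α‖ * T⁻¹ := by
      refine Finset.sum_le_sum fun α _ => ?_
      rw [sub_zero]
      refine mul_le_mul_of_nonneg_left ?_ (norm_nonneg _)
      have hstep : ∏ j, ‖w j‖ ^ (α : Fin s → ℕ) j
          ≤ ∏ j, (T⁻¹ : ℝ) ^ (α : Fin s → ℕ) j := by
        refine Finset.prod_le_prod (fun j _ => pow_nonneg (norm_nonneg _) _)
          (fun j _ => pow_le_pow_left₀ (norm_nonneg _) (hw j) _)
      refine le_trans hstep ?_
      rw [Finset.prod_pow_eq_pow_sum]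
      exact pow_le_of_le_one (inv_pos.2 hT0).le (inv_le_one_of_one_le₀ hT1) (deg_ne_zero α)
    rw [← Finset.sum_mul] at h2
    have h3 : (∑ α : idxSet s r, ‖x α‖) * T⁻¹ < 1 := by
      rw [← lt_div_iff₀ (inv_pos.2 hT0), one_div, inv_inv, hT]
      linarith
    linarith
  rw [h0] at hlt
  simp at hlt

lemma Sset_bddBelow (x : idxSet s r → ℂ) : BddBelow (Sset s r x) :=
  ⟨0, fun t ht => ht.1.le⟩

lemma minkowski_nonneg (x : idxSet s r → ℂ) : 0 ≤ tetraMinkowski s r x := by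
  rw [minkowski_eq]
  exact le_csInf ⟨_, Sset_nonempty x⟩ fun t ht => ht.1.le

end TetraAux

namespace TetraAux

variable {s : ℕ} {r : Fin s → ℕ}

/-- If `x ≠ 0` then `R_x` has a zero somewhere in `ℂ^s`. -/
lemma exists_zero_of_ne (x : idxSet s r → ℂ) (hx : x ≠ 0) :
    ∃ z : Fin s → ℂ, tetraR s r x z = 0 := by
  classical
  set c : idxSet s r → ℂ := fun α => (-1 : ℂ) ^ deg α * x α with hc
  obtain ⟨α₀, hα₀⟩ : ∃ α, x α ≠ 0 := by
    by_contra h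
    push_neg at h
    exact hx (funext h)
  set P : MvPolynomial (Fin s) ℂ := ∑ α : idxSet s r,
    MvPolynomial.monomial (Finsupp.equivFunOnFinite.symm ((α : Fin s → ℕ))) (c α) with hP
  have hinj : Function.Injective
      (fun α : idxSet s r => Finsupp.equivFunOnFinite.symm ((α : Fin s → ℕ))) := by
    intro a b hab
    exact Subtype.ext (Finsupp.equivFunOnFinite.symm.injective hab)
  have hcoeff : ∀ α : idxSet s r,
      P.coeff (Finsupp.equivFunOnFinite.symm ((α : Fin s → ℕ))) = c α := by
    intro β
    rw [hP, MvPolynomial.coeff_sum]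
    rw [Finset.sum_eq_single β]
    · rw [MvPolynomial.coeff_monomial, if_pos rfl]
    · intro α _ hne
      rw [MvPolynomial.coeff_monomial, if_neg (fun h => hne (hinj h))]
    · intro h
      exact absurd (Finset.mem_univ β) h
  have hPne : P ≠ 0 := by
    intro h
    have h2 := hcoeff α₀
    rw [h, MvPolynomial.coeff_zero] at h2
    have : c α₀ = 0 := h2.symm
    rw [hc] at this
    simp only [mul_eq_zero] at this
    rcases this with h3 | h3
    · exact pow_ne_zero _ (neg_ne_zero.2 one_ne_zero) h3
    · exact hα₀ h3
  obtain ⟨w, hw⟩ : ∃ w : Fin s → ℂ, MvPolynomial.eval w P ≠ 0 := by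
    by_contra h
    push_neg at h
    refine hPne (MvPolynomial.funext (q := 0) fun y => ?_)
    rw [h y, map_zero]
  have heval : MvPolynomial.eval w P
      = ∑ α : idxSet s r, c α * ∏ j, w j ^ (α : Fin s → ℕ) j := by
    rw [hP, map_sum]
    refine Finset.sum_congr rfl fun α _ => ?_
    rw [MvPolynomial.eval_monomial, Finsupp.prod_fintype _ _ (fun j => pow_zero _)]
    congr 1
  have hR : tetraR s r x w = 1 + MvPolynomial.eval w P := by
    rw [heval, tetraR_apply]
  -- the line polynomial through w is nonconstant
  have hne1 : (linePoly x w).eval 1 ≠ 1 := by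
    rw [eval_one_linePoly, hR]
    intro h
    exact hw (by linear_combination h - 1)
  have hndeg : (linePoly x w).natDegree ≠ 0 := by
    intro h
    have h2 := Polynomial.eq_C_of_natDegree_eq_zero h
    rw [linePoly_coeff_zero] at h2
    rw [h2, Polynomial.eval_C] at hne1
    exact hne1 rfl
  obtain ⟨β, hβ⟩ := Complex.exists_root
    (Polynomial.natDegree_pos_iff_degree_pos.1 (Nat.pos_of_ne_zero hndeg))
  refine ⟨fun j => β * w j, ?_⟩
  rw [← eval_linePoly]
  exact hβ

/-- minimum of `|R_x|` over a closed polydisc is positive when `R_x` is non-vanishing there -/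
lemma exists_pos_min (x : idxSet s r → ℂ) (R : ℝ) (hR : 0 ≤ R)
    (h : ∀ z : Fin s → ℂ, (∀ j, ‖z j‖ ≤ R) → tetraR s r x z ≠ 0) :
    ∃ μ > 0, ∀ z : Fin s → ℂ, (∀ j, ‖z j‖ ≤ R) →
      μ ≤ ‖tetraR s r x z‖ := by
  set K : Set (Fin s → ℂ) := Set.univ.pi fun _ => Metric.closedBall (0 : ℂ) R with hK
  have hmemK : ∀ z : Fin s → ℂ, z ∈ K ↔ ∀ j, ‖z j‖ ≤ R := by
    intro z
    simp [hK, Set.mem_pi, Metric.mem_closedBall, Complex.dist_eq, sub_zero]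
  have hcomp : IsCompact K := isCompact_univ_pi fun _ => isCompact_closedBall _ _
  have hKne : K.Nonempty := ⟨fun _ => 0, (hmemK _).2 fun j => by simp [hR]⟩
  have hcont : ContinuousOn (fun z => ‖tetraR s r x z‖) K :=
    (continuous_norm.comp (continuous_tetraR x)).continuousOn
  obtain ⟨z₀, hz₀K, hz₀min⟩ := hcomp.exists_isMinOn hKne hcont
  refine ⟨‖tetraR s r x z₀‖, ?_, fun z hz => hz₀min ((hmemK z).2 hz)⟩
  exact norm_pos_iff.2 (h z₀ ((hmemK z₀).1 hz₀K))

/-- membership of `t` in `Sset` is stable under small perturbations of `x` -/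
lemma stable_mem (x : idxSet s r → ℂ) (t : ℝ) (ht : t ∈ Sset s r x) :
    ∃ δ > 0, ∀ x' : idxSet s r → ℂ, (∀ α, ‖x' α - x α‖ < δ) →
      t ∈ Sset s r x' := by
  obtain ⟨ht0, hmem⟩ := ht
  obtain ⟨μ, hμ, hmin⟩ := exists_pos_min x t⁻¹ (inv_pos.2 ht0).le hmem
  set Ct : ℝ := ∑ _α : idxSet s r, (max 1 t⁻¹) ^ degBound s r with hCt
  have hCt0 : 0 ≤ Ct := Finset.sum_nonneg fun α _ =>
    pow_nonneg (le_trans zero_le_one (le_max_left _ _)) _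
  refine ⟨μ / (1 + Ct), by positivity, fun x' hx' => ⟨ht0, fun w hw h0 => ?_⟩⟩
  have hdiff : ‖tetraR s r x' w - tetraR s r x w‖ ≤ (μ / (1 + Ct)) * Ct := by
    refine le_trans (abs_tetraR_sub x x' w) ?_
    rw [hCt, Finset.mul_sum]
    refine Finset.sum_le_sum fun α _ => ?_
    have hprod : ∏ j, ‖w j‖ ^ (α : Fin s → ℕ) j ≤ (max 1 t⁻¹) ^ degBound s r := by
      have h1 : ∏ j, ‖w j‖ ^ (α : Fin s → ℕ) j
          ≤ ∏ j, (max 1 t⁻¹) ^ (α : Fin s → ℕ) j :=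
        Finset.prod_le_prod (fun j _ => pow_nonneg (norm_nonneg _) _)
          (fun j _ => pow_le_pow_left₀ (norm_nonneg _)
            (le_trans (hw j) (le_max_right _ _)) _)
      rw [Finset.prod_pow_eq_pow_sum] at h1
      refine le_trans h1 (pow_le_pow_right₀ (le_max_left _ _) (deg_le_degBound α))
    calc ‖x' α - x α‖ * ∏ j, ‖w j‖ ^ (α : Fin s → ℕ) j
        ≤ (μ / (1 + Ct)) * ((max 1 t⁻¹) ^ degBound s r) := by
          refine mul_le_mul (hx' α).le hprod
            (Finset.prod_nonneg fun j _ => pow_nonneg (norm_nonneg _) _) (by positivity)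
      _ = (μ / (1 + Ct)) * ((max 1 t⁻¹) ^ degBound s r) := rfl
  have hlt : (μ / (1 + Ct)) * Ct < μ := by
    rw [div_mul_eq_mul_div, div_lt_iff₀ (by linarith)]
    nlinarith
  have hlb := hmin w hw
  rw [h0] at hdiff
  have he : ‖0 - tetraR s r x w‖ = ‖tetraR s r x w‖ := by
    rw [zero_sub, norm_neg]
  rw [he] at hdiff
  linarith

end TetraAux

namespace TetraAux

variable {s : ℕ} {r : Fin s → ℕ}

/-- a zero of `R_x` in the closed polydisc of radius `R` forces `sInf (Sset x) ≥ R⁻¹` -/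
lemma sInf_lower_of_zero (x : idxSet s r → ℂ) {w : Fin s → ℂ} {R : ℝ} (hR : 0 < R)
    (hw : ∀ j, ‖w j‖ ≤ R) (h0 : tetraR s r x w = 0) :
    R⁻¹ ≤ sInf (Sset s r x) := by
  refine le_csInf ⟨_, Sset_nonempty x⟩ fun t ht => ?_
  obtain ⟨ht0, hmem⟩ := ht
  by_contra hlt
  push_neg at hlt
  have hRt : R ≤ t⁻¹ := by
    have := (inv_strictAnti₀ ht0 hlt)
    rw [inv_inv] at this
    exact this.le
  exact hmem w (fun j => le_trans (hw j) hRt) h0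

/-- from a zero of `R_x` extract the maximal coordinate modulus, which is positive -/
lemma exists_max_coord (x : idxSet s r → ℂ) {w : Fin s → ℂ} (h0 : tetraR s r x w = 0) :
    ∃ jm : Fin s, 0 < ‖w jm‖ ∧ ∀ j, ‖w j‖ ≤ ‖w jm‖ := by
  obtain ⟨j₁, hj₁⟩ : ∃ j, w j ≠ 0 := by
    by_contra h
    push_neg at h
    have : w = fun _ => (0 : ℂ) := funext h
    rw [this, tetraR_zero_z] at h0
    exact one_ne_zero h0
  obtain ⟨jm, _, hjm⟩ := Finset.exists_max_image (Finset.univ : Finset (Fin s))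
    (fun j => ‖w j‖) ⟨j₁, Finset.mem_univ j₁⟩
  refine ⟨jm, lt_of_lt_of_le (norm_pos_iff.2 hj₁) (hjm j₁ (Finset.mem_univ j₁)),
    fun j => hjm j (Finset.mem_univ j)⟩

/-- points in the closure of the tetrablock have non-vanishing `R_x` on the open polydisc -/
lemma closure_nonvanishing {x : idxSet s r → ℂ} (hx : x ∈ closure (genTetrablock s r))
    (z : Fin s → ℂ) (hz : ∀ j, ‖z j‖ < 1) : tetraR s r x z ≠ 0 := by
  intro h0
  obtain ⟨jm, hM0, hMmax⟩ := exists_max_coord x h0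
  set M : ℝ := ‖z jm‖ with hM
  have hM1 : M < 1 := hz jm
  set ρ : ℝ := (M + 1) / 2 with hρdef
  have hMρ : M < ρ := by rw [hρdef]; linarith
  have hρ1 : ρ < 1 := by rw [hρdef]; linarith
  have hρ0 : 0 < ρ := lt_trans hM0 hMρ
  set B : ℝ := ρ / M with hBdef
  have hB : 1 < B := (one_lt_div hM0).2 hMρ
  have hBz : ∀ j, B * ‖z j‖ ≤ ρ := by
    intro j
    have h1 : B * ‖z j‖ ≤ B * M :=
      mul_le_mul_of_nonneg_left (hMmax j) (by linarith : (0:ℝ) ≤ B)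
    rw [hBdef, div_mul_cancel₀ ρ (ne_of_gt hM0)] at h1
    exact h1
  obtain ⟨δ, hδ, hpert⟩ := perturb_root x z h0 ρ B hρ0 hB hBz
  obtain ⟨x', hx'D, hdist⟩ := Metric.mem_closure_iff.1 hx δ hδ
  have hcoord : ∀ α, ‖x' α - x α‖ < δ := by
    intro α
    rw [← Complex.dist_eq]
    calc dist (x' α) (x α) ≤ dist x' x := dist_le_pi_dist x' x α
      _ = dist x x' := dist_comm _ _
      _ < δ := hdist
  obtain ⟨z', hz'ρ, hz'0⟩ := hpert x' hcoord
  exact hx'D z' (fun j => le_trans (hz'ρ j) hρ1.le) hz'0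

/-- the tetrablock is open -/
lemma isOpen_genTetrablock : IsOpen (genTetrablock s r) := by
  rw [Metric.isOpen_iff]
  intro x hx
  rw [mem_genTetrablock_iff_one_mem] at hx
  obtain ⟨δ, hδ, hstab⟩ := stable_mem x 1 hx
  refine ⟨δ, hδ, fun x' hx' => ?_⟩
  rw [mem_genTetrablock_iff_one_mem]
  refine hstab x' fun α => ?_
  rw [← Complex.dist_eq]
  calc dist (x' α) (x α) ≤ dist x' x := dist_le_pi_dist x' x α
    _ < δ := hx'

end TetraAux

open TetraAux in
/-- For the block structure `(r₁, 1, …, 1)`, the boundary of `𝔼_E` is contained in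
`{𝔥 = 1}`; consequently the `m`-Minkowski functional `𝔥` is continuous. -/
theorem genTetrablock_minkowski_continuous
    (n s : ℕ) (hn : 2 ≤ n) (hs : s ≤ n)
    (r : Fin s → ℕ) (hr : ∀ j, 1 ≤ r j) (hsum : ∑ j, r j = n)
    (htail : ∀ j : Fin s, 0 < (j : ℕ) → r j = 1) :
    (frontier (genTetrablock s r) ⊆ {x : idxSet s r → ℂ | tetraMinkowski s r x = 1}) ∧
    Continuous (tetraMinkowski s r) := by
  constructor
  · -- frontier statement
    intro x hx
    rw [isOpen_genTetrablock.frontier_eq, Set.mem_diff] at hx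
    obtain ⟨hclos, hnotD⟩ := hx
    have hzero : ∃ z : Fin s → ℂ, (∀ j, ‖z j‖ ≤ 1) ∧ tetraR s r x z = 0 := by
      by_contra h
      push_neg at h
      exact hnotD fun z hz => h z hz
    obtain ⟨zstar, hzstar, hzstar0⟩ := hzero
    show tetraMinkowski s r x = 1
    rw [minkowski_eq]
    refine le_antisymm ?_ ?_
    · refine le_of_forall_pos_le_add fun ε hε => ?_
      refine csInf_le (Sset_bddBelow x) ⟨by linarith, fun w hw => ?_⟩
      refine closure_nonvanishing hclos w fun j => ?_
      calc ‖w j‖ ≤ (1 + ε)⁻¹ := hw j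
        _ < 1 := by
          rw [inv_lt_one_iff₀]
          right; linarith
    · have := sInf_lower_of_zero x one_pos hzstar hzstar0
      rwa [inv_one] at this
  · -- continuity
    rw [Metric.continuous_iff]
    intro x ε hε
    -- upper semicontinuity data
    obtain ⟨t, htS, htlt⟩ := Real.lt_sInf_add_pos ⟨_, Sset_nonempty x⟩ hε
    obtain ⟨δ₁, hδ₁, hstab⟩ := stable_mem x t htS
    -- lower semicontinuity data
    by_cases hcase : sInf (Sset s r x) < ε
    · -- trivial lower bound
      refine ⟨δ₁, hδ₁, fun x' hdist => ?_⟩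
      rw [Real.dist_eq, abs_sub_lt_iff]
      have hcoord : ∀ α, ‖x' α - x α‖ < δ₁ := by
        intro α
        rw [← Complex.dist_eq]
        exact lt_of_le_of_lt (dist_le_pi_dist x' x α) hdist
      have hup : tetraMinkowski s r x' ≤ t := by
        rw [minkowski_eq]
        exact csInf_le (Sset_bddBelow x') (hstab x' hcoord)
      rw [← minkowski_eq] at htlt hcase
      have h1 := minkowski_nonneg x'
      constructor
      · linarith
      · linarith
    · push_neg at hcase
      have hε2 : 0 < sInf (Sset s r x) - ε / 2 := by linarith
      set t₂ : ℝ := sInf (Sset s r x) - ε / 2 with ht₂def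
      have ht₂not : t₂ ∉ Sset s r x := by
        intro hmem
        have := csInf_le (Sset_bddBelow x) hmem
        rw [ht₂def] at this
        linarith
      have hzero : ∃ w : Fin s → ℂ, (∀ j, ‖w j‖ ≤ t₂⁻¹) ∧ tetraR s r x w = 0 := by
        by_contra h
        push_neg at h
        exact ht₂not ⟨hε2, fun w hw => h w hw⟩
      obtain ⟨w, hw, hw0⟩ := hzero
      obtain ⟨jm, hM0, hMmax⟩ := exists_max_coord x hw0
      set M : ℝ := ‖w jm‖ with hMdef
      have hMt₂ : M ≤ t₂⁻¹ := hw jm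
      set ρ : ℝ := (sInf (Sset s r x) - 3 / 4 * ε)⁻¹ with hρdef
      have hq : 0 < sInf (Sset s r x) - 3 / 4 * ε := by linarith
      have hρ0 : 0 < ρ := inv_pos.2 hq
      have hMρ : M < ρ := by
        refine lt_of_le_of_lt hMt₂ ?_
        rw [hρdef, ht₂def]
        exact inv_strictAnti₀ hq (by linarith)
      set B : ℝ := ρ / M with hBdef
      have hB : 1 < B := (one_lt_div hM0).2 hMρ
      have hBz : ∀ j, B * ‖w j‖ ≤ ρ := by
        intro j
        have h1 : B * ‖w j‖ ≤ B * M :=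
          mul_le_mul_of_nonneg_left (hMmax j) (by linarith : (0:ℝ) ≤ B)
        rwa [hBdef, div_mul_cancel₀ ρ (ne_of_gt hM0)] at h1
      obtain ⟨δ₂, hδ₂, hpert⟩ := perturb_root x w hw0 ρ B hρ0 hB hBz
      refine ⟨min δ₁ δ₂, lt_min hδ₁ hδ₂, fun x' hdist => ?_⟩
      have hcoord : ∀ α, ‖x' α - x α‖ < min δ₁ δ₂ := by
        intro α
        rw [← Complex.dist_eq]
        exact lt_of_le_of_lt (dist_le_pi_dist x' x α) hdist
      have hup : tetraMinkowski s r x' ≤ t := by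
        rw [minkowski_eq]
        exact csInf_le (Sset_bddBelow x')
          (hstab x' fun α => lt_of_lt_of_le (hcoord α) (min_le_left _ _))
      obtain ⟨z', hz'ρ, hz'0⟩ := hpert x' fun α => lt_of_lt_of_le (hcoord α) (min_le_right _ _)
      have hlow : sInf (Sset s r x) - 3 / 4 * ε ≤ tetraMinkowski s r x' := by
        rw [minkowski_eq]
        have := sInf_lower_of_zero x' hρ0 hz'ρ hz'0
        rwa [hρdef, inv_inv] at this
      rw [← minkowski_eq] at htlt hlow
      rw [Real.dist_eq, abs_sub_lt_iff]
      constructor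
      · linarith
      · linarith
end

section
/- Let n ≥ 2, s ≤ n, r₁,…,r_s positive integers with Σ r_j = n, E = { diag(z₁I_{r₁},…,z_sI_{r_s}) } ⊆ ℂ^{n×n}, and π_E : ℂ^{n×n} → ℂ^N the polynomial map whose j-th component is Σ_{I ∈ 𝒥^{|α^j|}_{α^j}} det A_I. Then π_E maps Ω_{μ_E} = { A : μ_E(A) < 1 } into the generalized tetrablock 𝔼_E = { x ∈ ℂ^N : 1 + Σ_j (−1)^{|α^j|} x_j z^{α^j} ≠ 0 ∀ z ∈ 𝔻̄^s }. -/
open Set Finset Matrix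

/-- The operator norm of a matrix acting on the Euclidean space `ℓ²(Fin n)`. -/
noncomputable def matOpNorm {n : ℕ} (A : Matrix (Fin n) (Fin n) ℂ) : ℝ :=
  ‖(Matrix.toEuclideanCLM (𝕜 := ℂ) A : EuclideanSpace ℂ (Fin n) →L[ℂ] EuclideanSpace ℂ (Fin n))‖

/-- The space `E = {diag(z₁I_{r₁},…,z_sI_{r_s})}`, encoded via a monotone block map
`b : Fin n → Fin s` whose fiber over `j` has `r j` elements. -/
def scalarBlockDiag {n s : ℕ} (b : Fin n → Fin s) : Set (Matrix (Fin n) (Fin n) ℂ) :=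
  {X | ∃ z : Fin s → ℂ, X = Matrix.diagonal fun i => z (b i)}

/-- The structured singular value `μ_E` relative to `E`. -/
noncomputable def muE {n s : ℕ} (b : Fin n → Fin s) (A : Matrix (Fin n) (Fin n) ℂ) : ℝ :=
  (sInf {t : ℝ | ∃ X ∈ scalarBlockDiag b, (1 - A * X).det = 0 ∧ t = matOpNorm X})⁻¹

/-- The polynomial map `π_E : ℂ^{n×n} → ℂ^N`, whose `α`-th component is
`Σ_{I ∈ 𝒥^{|α|}_α} det A_I`, where `𝒥^{|α|}_α` consists of the index sets taking exactly
`α_j` indices from the `j`-th block. -/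
noncomputable def piE (n s : ℕ) (b : Fin n → Fin s) (r : Fin s → ℕ)
    (A : Matrix (Fin n) (Fin n) ℂ) : idxSet s r → ℂ :=
  fun α => ∑ I ∈ Finset.univ.powerset.filter
      (fun I : Finset (Fin n) =>
        ∀ j, (I.filter fun i => b i = j).card = (α : Fin s → ℕ) j),
    (A.submatrix (fun i : I => (i : Fin n)) (fun i : I => (i : Fin n))).det

/-!
For `X = diag(z_{b(i)})`, expanding `det (1 - A X)` into principal minors and grouping the index
sets `I` by the number of indices they take from each block shows `det (1 - A X) = R_{π_E(A)}(z)`.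
A zero `z` of `R_{π_E(A)}` in the closed polydisc therefore gives `X ∈ E` with `‖X‖ = max |z_j| ≤ 1`
and `1 - A X` singular, so `μ_E(A) ≥ 1`. For this the infimum defining `μ_E(A)` must be
positive (`x⁻¹ ≤ 0` for real `x ≤ 0`); it is, because `‖A‖ ‖X‖ ≥ 1` whenever `1 - A X` is singular.
-/

open scoped Matrix.Norms.L2Operator

namespace Matrix

variable {ι R : Type*} [Fintype ι] [DecidableEq ι] [CommRing R]

theorem det_one_add_eq_sum_det_submatrix (M : Matrix ι ι R) :
    (1 + M).det = ∑ s : Finset ι, (M.submatrix ((↑) : s → ι) (↑)).det := by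
  rw [add_comm, det_apply', ← det_apply']
  have := (detRowAlternating : (ι → R) [⋀^ι]→ₗ[R] R).map_add_univ M.row (1 : Matrix ι ι R).row
  exact this.trans (Finset.sum_congr rfl fun s _ => det_piecewise_one_eq_submatrix_det M s)

theorem det_one_sub_mul_diagonal (A : Matrix ι ι R) (d : ι → R) :
    (1 - A * diagonal d).det = ∑ s : Finset ι,
      (-1) ^ s.card * (∏ i ∈ s, d i) * (A.submatrix ((↑) : s → ι) (↑)).det := by
  rw [sub_eq_add_neg, det_one_add_eq_sum_det_submatrix]
  refine Finset.sum_congr rfl fun s _ => ?_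
  have : (-(A * diagonal d)).submatrix ((↑) : s → ι) (↑) =
      -(A.submatrix (↑) (↑) * diagonal fun i : s => d i) := by
    ext; simp [mul_diagonal]
  rw [this, det_neg, det_mul, det_diagonal, Fintype.card_coe, Finset.prod_coe_sort]
  ring

theorem det_one_sub_mul_ne_zero {𝕜 : Type*} [RCLike 𝕜] {A X : Matrix ι ι 𝕜}
    (h : ‖A‖ * ‖X‖ < 1) : (1 - A * X).det ≠ 0 :=
  ((isUnit_iff_isUnit_det _).mp
    (Units.oneSub (A * X) ((norm_mul_le A X).trans_lt h)).isUnit).ne_zero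

end Matrix

section BlockCount

variable {ι κ : Type*} [Fintype κ] [DecidableEq κ] (b : ι → κ)

def blockCount (I : Finset ι) : κ → ℕ := fun j => (I.filter fun i => b i = j).card

theorem sum_blockCount (I : Finset ι) : ∑ j, blockCount b I j = I.card :=
  (Finset.card_eq_sum_card_fiberwise fun i _ => Finset.mem_univ (b i)).symm

theorem blockCount_eq_zero_iff {I : Finset ι} : blockCount b I = 0 ↔ I = ∅ := by
  rw [← Finset.card_eq_zero, ← sum_blockCount b I, Finset.sum_eq_zero_iff, funext_iff]
  simp

theorem prod_comp_eq_prod_pow_blockCount {M : Type*} [CommMonoid M] (z : κ → M)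
    (I : Finset ι) : ∏ i ∈ I, z (b i) = ∏ j, z j ^ blockCount b I j := by
  rw [← Finset.prod_fiberwise I b]
  refine Finset.prod_congr rfl fun j _ => ?_
  rw [Finset.prod_congr rfl fun i hi => congrArg z (Finset.mem_filter.mp hi).2, Finset.prod_const]
  rfl

end BlockCount

theorem piE_apply {n s : ℕ} (b : Fin n → Fin s) (r : Fin s → ℕ) (A : Matrix (Fin n) (Fin n) ℂ)
    (α : idxSet s r) :
    piE n s b r A α = ∑ I with blockCount b I = α,
      (A.submatrix ((↑) : I → Fin n) (↑)).det := by
  rw [piE, Finset.powerset_univ]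
  refine Finset.sum_congr (Finset.filter_congr fun I _ => ?_) fun _ _ => rfl
  rw [funext_iff]
  rfl

theorem det_one_sub_mul_diagonal_comp_eq_tetraR {n s : ℕ} {b : Fin n → Fin s} {r : Fin s → ℕ}
    (hcard : ∀ j, (Finset.univ.filter fun i => b i = j).card = r j)
    (A : Matrix (Fin n) (Fin n) ℂ) (z : Fin s → ℂ) :
    (1 - A * diagonal fun i => z (b i)).det = tetraR s r (piE n s b r A) z := by
  set c : (Fin s → ℕ) → ℂ := fun α => (-1) ^ (∑ j, α j) * ∏ j, z j ^ α j
  set P := Fintype.piFinset fun j => Finset.range (r j + 1)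
  have hmaps : ∀ I ∈ (Finset.univ : Finset (Finset (Fin n))), blockCount b I ∈ P := by
    intro I _
    refine Fintype.mem_piFinset.mpr fun j => Finset.mem_range_succ_iff.mpr ?_
    exact hcard j ▸ Finset.card_le_card (Finset.filter_subset_filter _ (Finset.subset_univ I))
  have hempty : ∑ I with blockCount b I = 0, (A.submatrix ((↑) : I → Fin n) (↑)).det = 1 := by
    rw [Finset.filter_congr fun I _ => blockCount_eq_zero_iff b, Finset.filter_eq']
    simp
  calc (1 - A * diagonal fun i => z (b i)).det
      = ∑ I, c (blockCount b I) * (A.submatrix ((↑) : I → Fin n) (↑)).det := by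
        rw [det_one_sub_mul_diagonal]
        refine Finset.sum_congr rfl fun I _ => ?_
        rw [prod_comp_eq_prod_pow_blockCount, ← sum_blockCount b I]
    _ = ∑ α ∈ P, c α * ∑ I with blockCount b I = α, (A.submatrix ((↑) : I → Fin n) (↑)).det := by
        rw [← Finset.sum_fiberwise_of_maps_to hmaps]
        refine Finset.sum_congr rfl fun α _ => ?_
        rw [Finset.mul_sum]
        exact Finset.sum_congr rfl fun I hI => by rw [(Finset.mem_filter.mp hI).2]
    _ = c 0 + ∑ α ∈ idxSet s r, c α * ∑ I with blockCount b I = α,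
          (A.submatrix ((↑) : I → Fin n) (↑)).det := by
        have hzero : (0 : Fin s → ℕ) ∈ P :=
          Fintype.mem_piFinset.mpr fun j => Finset.mem_range.mpr (r j).succ_pos
        rw [← Finset.add_sum_erase P _ hzero, hempty, mul_one]
        rfl
    _ = tetraR s r (piE n s b r A) z := by
        rw [tetraR, ← Finset.sum_coe_sort (idxSet s r)]
        simp only [c, piE_apply, Pi.zero_apply, Finset.sum_const_zero, pow_zero,
          Finset.prod_const_one, mul_one]
        exact congrArg _ (Finset.sum_congr rfl fun α _ => by ring)

theorem matOpNorm_eq_norm {n : ℕ} (A : Matrix (Fin n) (Fin n) ℂ) : matOpNorm A = ‖A‖ := rfl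

theorem one_le_muE {n s : ℕ} {b : Fin n → Fin s} {A X : Matrix (Fin n) (Fin n) ℂ}
    (hX : X ∈ scalarBlockDiag b) (hdet : (1 - A * X).det = 0) (hX₁ : matOpNorm X ≤ 1) :
    1 ≤ muE b A := by
  set S := {t : ℝ | ∃ Y ∈ scalarBlockDiag b, (1 - A * Y).det = 0 ∧ t = matOpNorm Y}
  have hXS : matOpNorm X ∈ S := ⟨X, hX, hdet, rfl⟩
  have hlower : ∀ t ∈ S, (‖A‖ + 1)⁻¹ ≤ t := by
    rintro _ ⟨Y, -, hY, rfl⟩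
    have h₁ : 1 ≤ ‖A‖ * ‖Y‖ := not_lt.mp fun h => Matrix.det_one_sub_mul_ne_zero h hY
    rw [matOpNorm_eq_norm, inv_le_iff_one_le_mul₀ (by positivity)]
    nlinarith [norm_nonneg Y]
  have hpos : 0 < sInf S := (inv_pos.mpr (by positivity)).trans_le (le_csInf ⟨_, hXS⟩ hlower)
  exact (one_le_inv₀ hpos).mpr ((csInf_le ⟨_, hlower⟩ hXS).trans hX₁)

theorem piE_maps_omega_into_genTetrablock_general
    (n s : ℕ)
    (r : Fin s → ℕ)
    (b : Fin n → Fin s)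
    (hcard : ∀ j, (Finset.univ.filter fun i => b i = j).card = r j) :
    ∀ A : Matrix (Fin n) (Fin n) ℂ, muE b A < 1 → piE n s b r A ∈ genTetrablock s r := by
  intro A hA z hz hR
  have hD : matOpNorm (diagonal fun i => z (b i)) ≤ 1 := by
    rw [matOpNorm_eq_norm, l2_opNorm_diagonal]
    exact (pi_norm_le_iff_of_nonneg zero_le_one).mpr fun i => hz (b i)
  have hdet : (1 - A * diagonal fun i => z (b i)).det = 0 :=
    (det_one_sub_mul_diagonal_comp_eq_tetraR hcard A z).trans hR
  exact hA.not_ge (one_le_muE ⟨z, rfl⟩ hdet hD)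

/-- `π_E` maps `Ω_{μ_E} = {μ_E < 1}` into the generalized tetrablock `𝔼_E`. -/
theorem piE_maps_omega_into_genTetrablock
    (n s : ℕ) (hn : 2 ≤ n) (hs : s ≤ n)
    (r : Fin s → ℕ) (hr : ∀ j, 1 ≤ r j) (hsum : ∑ j, r j = n)
    (b : Fin n → Fin s) (hb : Monotone b)
    (hcard : ∀ j, (Finset.univ.filter fun i => b i = j).card = r j) :
    ∀ A : Matrix (Fin n) (Fin n) ℂ, muE b A < 1 → piE n s b r A ∈ genTetrablock s r :=
  piE_maps_omega_into_genTetrablock_general n s r b hcard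
end

section
/- Let G be a taut domain which is an analytic retract of a domain D, and suppose there is no holomorphic F : G × G → G with F(z,z) = z and F(z,w) = F(w,z). Then D cannot be exhausted by domains biholomorphic to convex ones: there do not exist domains D₁ ⊆ D₂ ⊆ … with ∪ D_j = D and biholomorphisms f_j : D_j → Ω_j onto convex domains Ω_j. -/
open Set Metric Filter Topology
open scoped ENNReal NNReal

section Helpers

variable {E' F' : Type*} [NormedAddCommGroup E'] [NormedSpace ℂ E']
  [NormedAddCommGroup F'] [NormedSpace ℂ F']

/-- Schwarz-type bounds along complex lines: Lipschitz bound and derivative bound. -/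
lemma line_bound (H : E' → F') {S : Set E'} (hS : IsOpen S) (hH : DifferentiableOn ℂ H S)
    {x : E'} {r B : ℝ} (hr : 0 < r) (hB : 0 < B) (hball : ball x r ⊆ S)
    (hbd : ∀ q ∈ ball x r, ‖H q - H x‖ < B) :
    (∀ y ∈ ball x r, ‖H y - H x‖ ≤ B / r * ‖y - x‖) ∧
    (∀ v : E', ‖fderiv ℂ H x v‖ ≤ B / r * ‖v‖) := by
  have hxS : x ∈ ball x r := mem_ball_self hr
  have hxd : DifferentiableAt ℂ H x :=
    (hH x (hball hxS)).differentiableAt (hS.mem_nhds (hball hxS))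
  have key : ∀ v : E', v ≠ 0 →
      (∀ z : ℂ, z ∈ ball (0:ℂ) (r / ‖v‖) →
        ‖H (x + z • v) - H x‖ ≤ B / (r / ‖v‖) * ‖z‖) ∧
      ‖fderiv ℂ H x v‖ ≤ B / (r / ‖v‖) := by
    intro v hv
    have hvn : 0 < ‖v‖ := norm_pos_iff.2 hv
    have hR : 0 < r / ‖v‖ := div_pos hr hvn
    set u : ℂ → F' := fun t => H (x + t • v) with hu
    have hmap : ∀ t : ℂ, t ∈ ball (0:ℂ) (r / ‖v‖) → x + t • v ∈ ball x r := by
      intro t ht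
      rw [mem_ball, dist_eq_norm] at ht ⊢
      rw [add_sub_cancel_left, norm_smul]
      rw [sub_zero] at ht
      exact (lt_div_iff₀ hvn).1 ht
    have hud : DifferentiableOn ℂ u (ball (0:ℂ) (r/‖v‖)) := by
      apply hH.comp ((differentiable_id.smul_const v).const_add x).differentiableOn
      intro t ht
      exact hball (hmap t ht)
    have hu0 : u 0 = H x := by simp [hu]
    have humaps : MapsTo u (ball (0:ℂ) (r/‖v‖)) (ball (u 0) B) := by
      intro t ht
      rw [mem_ball, dist_eq_norm, hu0]
      exact hbd _ (hmap t ht)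
    have hD : HasDerivAt u (fderiv ℂ H x v) 0 := by
      have h1 : HasDerivAt (fun t : ℂ => x + t • v) v 0 := by
        simpa using ((hasDerivAt_id (0:ℂ)).smul_const v).const_add x
      have h2 : HasFDerivAt H (fderiv ℂ H x) ((fun t : ℂ => x + t • v) 0) := by
        simpa using hxd.hasFDerivAt
      exact h2.comp_hasDerivAt 0 h1
    constructor
    · intro z hz
      have := Complex.dist_le_div_mul_dist_of_mapsTo_ball hud (humaps.mono_right ball_subset_closedBall) hz
      rw [hu0] at this
      simpa [dist_eq_norm, hu] using this
    · have := Complex.norm_deriv_le_div_of_mapsTo_ball hud (humaps.mono_right ball_subset_closedBall) hR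
      rwa [hD.deriv] at this
  constructor
  · intro y hy
    by_cases hxy : y = x
    · subst hxy
      simp only [sub_self, norm_zero]
      positivity
    · have hv : y - x ≠ 0 := sub_ne_zero.2 hxy
      have hvn : 0 < ‖y - x‖ := norm_pos_iff.2 hv
      have h1 : (1:ℂ) ∈ ball (0:ℂ) (r / ‖y - x‖) := by
        rw [mem_ball, dist_zero_right, norm_one, lt_div_iff₀ hvn, one_mul]
        rwa [mem_ball, dist_eq_norm] at hy
      have := (key (y - x) hv).1 1 h1
      rw [one_smul, add_sub_cancel] at this
      rw [norm_one, mul_one] at this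
      calc ‖H y - H x‖ ≤ B / (r / ‖y - x‖) := this
        _ = B / r * ‖y - x‖ := by
            rw [div_div_eq_mul_div, div_mul_eq_mul_div, mul_comm]
  · intro v
    by_cases hv : v = 0
    · subst hv
      simp only [map_zero, norm_zero]
      positivity
    · have hvn : 0 < ‖v‖ := norm_pos_iff.2 hv
      have := (key v hv).2
      calc ‖fderiv ℂ H x v‖ ≤ B / (r / ‖v‖) := this
        _ = B / r * ‖v‖ := by rw [div_div_eq_mul_div, div_mul_eq_mul_div, mul_comm]

/-- metric criterion for `UniformCauchySeqOn`. -/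
lemma uniformCauchySeqOn_of_dist {ι α β : Type*} [PseudoMetricSpace β] {F : ι → α → β}
    {l : Filter ι} {s : Set α}
    (h : ∀ ε > (0:ℝ), ∀ᶠ q : ι × ι in l ×ˢ l, ∀ x ∈ s, dist (F q.1 x) (F q.2 x) < ε) :
    UniformCauchySeqOn F l s := by
  intro u hu
  rcases Metric.mem_uniformity_dist.1 hu with ⟨ε, hε, hrel⟩
  exact (h ε hε).mono fun q hq x hx => hrel (hq x hx)

/-- Compact exhaustion of an open subset of a proper space. -/
lemma exists_compact_absorbing {α : Type*} [MetricSpace α] [ProperSpace α] (c₀ : α)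
    (G : Set α) (hG : IsOpen G) :
    ∃ K : ℕ → Set α, (∀ k, IsCompact (K k) ∧ K k ⊆ G) ∧
      (∀ a b : ℕ, a ≤ b → K a ⊆ K b) ∧
      (∀ C : Set α, IsCompact C → C ⊆ G → ∃ N, C ⊆ K N) := by
  refine ⟨fun k => closedBall c₀ k ∩ {x | (1:ℝ≥0∞)/(k+1) ≤ EMetric.infEdist x Gᶜ}, ?_, ?_, ?_⟩
  · intro k
    constructor
    · apply IsCompact.of_isClosed_subset (isCompact_closedBall c₀ k)
      · apply IsClosed.inter Metric.isClosed_closedBall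
        have : {x | (1:ℝ≥0∞)/(k+1) ≤ EMetric.infEdist x Gᶜ}
            = (fun x => EMetric.infEdist x Gᶜ) ⁻¹' (Ici ((1:ℝ≥0∞)/(k+1))) := rfl
        rw [this]
        exact IsClosed.preimage (EMetric.continuous_infEdist) isClosed_Ici
      · exact inter_subset_left
    · intro x hx
      by_contra hxG
      have hx2 : EMetric.infEdist x Gᶜ = 0 := by
        exact EMetric.mem_closure_iff_infEdist_zero.1 (subset_closure hxG)
      have := hx.2
      simp only [mem_setOf_eq] at this
      rw [hx2, le_zero_iff] at this
      have : (1:ℝ≥0∞)/(k+1) ≠ 0 := by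
        apply ENNReal.div_ne_zero.2
        constructor
        · exact one_ne_zero
        · exact ENNReal.add_ne_top.2 ⟨ENNReal.natCast_ne_top k, ENNReal.one_ne_top⟩
      exact this ‹(1:ℝ≥0∞)/(k+1) = 0›
  · intro a b hab
    apply inter_subset_inter
    · exact closedBall_subset_closedBall (by exact_mod_cast hab)
    · intro x hx
      simp only [mem_setOf_eq] at hx ⊢
      refine le_trans ?_ hx
      apply ENNReal.div_le_div_left
      have : ((a:ℝ≥0∞)) ≤ b := by exact_mod_cast hab
      exact add_le_add_left this 1
  · intro C hC hCG
    rcases C.eq_empty_or_nonempty with hCe | hCne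
    · exact ⟨0, by simp [hCe]⟩
    have hbdd := hC.isBounded
    obtain ⟨R, hR⟩ := (Metric.isBounded_iff_subset_closedBall c₀).1 hbdd
    obtain ⟨x₀, hx₀C, hx₀min⟩ := hC.exists_isMinOn hCne (EMetric.continuous_infEdist).continuousOn
    have hx₀pos : 0 < EMetric.infEdist x₀ Gᶜ := by
      rcases eq_or_lt_of_le (zero_le : 0 ≤ EMetric.infEdist x₀ Gᶜ) with h0 | h0
      · exfalso
        have : x₀ ∈ closure Gᶜ := EMetric.mem_closure_iff_infEdist_zero.2 h0.symm
        rw [hG.isClosed_compl.closure_eq] at this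
        exact this (hCG hx₀C)
      · exact h0
    set ε := EMetric.infEdist x₀ Gᶜ
    have hinv : (1:ℝ≥0∞)/ε ≠ ⊤ := by
      simp only [ne_eq, ENNReal.div_eq_top]
      push_neg
      constructor
      · intro _; exact ne_of_gt hx₀pos
      · intro h; exact absurd h ENNReal.one_ne_top
    obtain ⟨N₁, hN₁⟩ := ENNReal.exists_nat_gt hinv
    obtain ⟨N₂, hN₂⟩ := exists_nat_ge R
    refine ⟨max N₁ N₂, fun x hx => ⟨?_, ?_⟩⟩
    · apply closedBall_subset_closedBall _ (hR hx)
      exact_mod_cast le_trans hN₂ (by exact_mod_cast le_max_right N₁ N₂)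
    · have h1 : (1:ℝ≥0∞)/ε ≤ (max N₁ N₂ : ℕ) + 1 := by
        refine le_trans (le_of_lt hN₁) ?_
        refine le_trans ?_ (le_add_right le_rfl)
        exact_mod_cast le_max_left N₁ N₂
      have h2 : (1:ℝ≥0∞)/((max N₁ N₂ : ℕ) + 1) ≤ ε := by
        rw [one_div] at h1 ⊢
        calc ((max N₁ N₂ : ℕ) + 1 : ℝ≥0∞)⁻¹ ≤ (ε⁻¹)⁻¹ := ENNReal.inv_le_inv.2 h1
          _ = ε := inv_inv ε
      exact le_trans h2 (hx₀min hx)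

end Helpers

/-- A domain `G ⊆ ℂ^m` is taut if every sequence of holomorphic maps `𝔻 → G` has a
subsequence converging locally uniformly to a holomorphic map `𝔻 → G`, or a subsequence
diverging locally uniformly (eventually leaving every compact subset of `G`). -/
def TautDomain (m : ℕ) (G : Set (Fin m → ℂ)) : Prop :=
  ∀ f : ℕ → ℂ → (Fin m → ℂ),
    (∀ j, DifferentiableOn ℂ (f j) (ball (0 : ℂ) 1) ∧ MapsTo (f j) (ball (0 : ℂ) 1) G) →
    ∃ φ : ℕ → ℕ, StrictMono φ ∧
      ((∃ g : ℂ → (Fin m → ℂ), DifferentiableOn ℂ g (ball (0 : ℂ) 1) ∧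
          MapsTo g (ball (0 : ℂ) 1) G ∧
          TendstoLocallyUniformlyOn (fun ν => f (φ ν)) g atTop (ball (0 : ℂ) 1)) ∨
        (∀ K ⊆ ball (0 : ℂ) 1, IsCompact K → ∀ C ⊆ G, IsCompact C →
          ∀ᶠ ν in atTop, ∀ z ∈ K, f (φ ν) z ∉ C))

set_option maxHeartbeats 2000000 in
/-- If a taut domain `G` is an analytic retract of a domain `D` and there is no holomorphic
`F : G × G → G` with `F(z,z) = z`, `F(z,w) = F(w,z)`, then `D` cannot be exhausted by
domains biholomorphic to convex ones. -/
theorem no_convex_exhaustion_of_taut_retract_no_symmetric_mean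
    (m n : ℕ) (G : Set (Fin m → ℂ)) (D : Set (Fin n → ℂ))
    (hGopen : IsOpen G) (hGconn : IsConnected G)
    (hDopen : IsOpen D) (hDconn : IsConnected D)
    (hGtaut : TautDomain m G)
    (θ : (Fin m → ℂ) → (Fin n → ℂ)) (ι : (Fin n → ℂ) → (Fin m → ℂ))
    (hθ : DifferentiableOn ℂ θ G) (hθmaps : MapsTo θ G D)
    (hι : DifferentiableOn ℂ ι D) (hιmaps : MapsTo ι D G)
    (hretract : ∀ x ∈ G, ι (θ x) = x)
    (hnoF : ¬ ∃ F : (Fin m → ℂ) × (Fin m → ℂ) → (Fin m → ℂ),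
      DifferentiableOn ℂ F (G ×ˢ G) ∧ MapsTo F (G ×ˢ G) G ∧
      (∀ z ∈ G, F (z, z) = z) ∧
      (∀ z ∈ G, ∀ w ∈ G, F (z, w) = F (w, z))) :
    ¬ ∃ Dseq : ℕ → Set (Fin n → ℂ),
      (∀ j, IsOpen (Dseq j) ∧ IsConnected (Dseq j)) ∧
      (∀ j, Dseq j ⊆ Dseq (j + 1)) ∧
      (⋃ j, Dseq j) = D ∧
      (∀ j, ∃ (Ω : Set (Fin n → ℂ)) (f g : (Fin n → ℂ) → (Fin n → ℂ)),
        IsOpen Ω ∧ Convex ℝ Ω ∧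
        DifferentiableOn ℂ f (Dseq j) ∧ MapsTo f (Dseq j) Ω ∧
        DifferentiableOn ℂ g Ω ∧ MapsTo g Ω (Dseq j) ∧
        (∀ x ∈ Dseq j, g (f x) = x) ∧ (∀ y ∈ Ω, f (g y) = y)) := by
  rintro ⟨Dseq, hDoc, hDmonos, hDunion, hDbi⟩
  apply hnoF
  obtain ⟨z₀, hz₀⟩ := hGconn.nonempty
  obtain ⟨K, hKc, hKmono, hKabs⟩ := exists_compact_absorbing z₀ G hGopen
  -- Step 1: consequence of tautness: uniform compact bound on half-disc for disc maps
  -- with value at 0 in a fixed compact.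
  have key1 : ∀ C₀ : Set (Fin m → ℂ), IsCompact C₀ → C₀ ⊆ G →
      ∃ C₁ : Set (Fin m → ℂ), IsCompact C₁ ∧ C₁ ⊆ G ∧
        ∀ f : ℂ → (Fin m → ℂ), DifferentiableOn ℂ f (ball (0:ℂ) 1) →
          MapsTo f (ball (0:ℂ) 1) G → f 0 ∈ C₀ → ∀ z : ℂ, ‖z‖ ≤ 1/2 → f z ∈ C₁ := by
    intro C₀ hC₀c hC₀G
    by_contra hcon
    push_neg at hcon
    choose f hfD hfM hf0 z hz hfz using fun k => hcon (K k) (hKc k).1 (hKc k).2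
    obtain ⟨φ, hφ, hcase⟩ := hGtaut f (fun k => ⟨hfD k, hfM k⟩)
    rcases hcase with ⟨g, hgD, hgM, hgconv⟩ | hdiv
    · have hT : closedBall (0:ℂ) (1/2) ⊆ ball (0:ℂ) 1 :=
        closedBall_subset_ball (by norm_num)
      rw [tendstoLocallyUniformlyOn_iff_forall_isCompact isOpen_ball] at hgconv
      have hTU := hgconv _ hT (isCompact_closedBall (0:ℂ) (1/2))
      have hgTc : IsCompact (g '' closedBall (0:ℂ) (1/2)) :=
        (isCompact_closedBall (0:ℂ) (1/2)).image_of_continuousOn (hgD.continuousOn.mono hT)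
      have hgTG : g '' closedBall (0:ℂ) (1/2) ⊆ G := by
        rintro - ⟨t, ht, rfl⟩; exact hgM (hT ht)
      obtain ⟨δ, hδpos, hδ⟩ := hgTc.exists_cthickening_subset_open hGopen hgTG
      have hLc : IsCompact (cthickening δ (g '' closedBall (0:ℂ) (1/2))) := by
        obtain ⟨R, hR⟩ := (Metric.isBounded_iff_subset_closedBall 0).1
          (hgTc.isBounded.cthickening (δ := δ))
        exact IsCompact.of_isClosed_subset (isCompact_closedBall 0 R) isClosed_cthickening hR
      obtain ⟨N, hN⟩ := hKabs _ hLc hδ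
      have hev1 := (Metric.tendstoUniformlyOn_iff.1 hTU) δ hδpos
      obtain ⟨ν, hν1, hν2⟩ := (hev1.and (eventually_ge_atTop N)).exists
      have hj : N ≤ φ ν := le_trans hν2 hφ.le_apply
      have hzT : z (φ ν) ∈ closedBall (0:ℂ) (1/2) := by
        rw [mem_closedBall, dist_zero_right]; exact hz (φ ν)
      have hd := hν1 _ hzT
      have hmem : f (φ ν) (z (φ ν)) ∈ cthickening δ (g '' closedBall (0:ℂ) (1/2)) := by
        apply mem_cthickening_of_dist_le (f (φ ν) (z (φ ν))) (g (z (φ ν))) δ _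
          (mem_image_of_mem g hzT)
        rw [dist_comm] at hd; exact hd.le
      exact hfz (φ ν) (hKmono N (φ ν) hj (hN hmem))
    · have h0sub : ({0} : Set ℂ) ⊆ ball (0:ℂ) 1 := by
        intro w hw; rw [mem_singleton_iff] at hw; subst hw; exact mem_ball_self one_pos
      have hev := hdiv {0} h0sub isCompact_singleton C₀ hC₀G hC₀c
      obtain ⟨ν, hν⟩ := hev.exists
      exact hν 0 rfl (hf0 (φ ν))
  -- Step 2: the approximating symmetric means via the exhaustion
  choose Ω ff gg hΩo hΩconv hffD hffM hggD hggM hgf hfgg using hDbi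
  have hDsub : ∀ j, Dseq j ⊆ D := fun j => hDunion ▸ subset_iUnion Dseq j
  have hDseqmono : Monotone Dseq := monotone_nat_of_le_succ hDmonos
  set Gs : ℕ → Set (Fin m → ℂ) := fun j => G ∩ θ ⁻¹' (Dseq j) with hGsdef
  have hGsopen : ∀ j, IsOpen (Gs j) := fun j =>
    hθ.continuousOn.isOpen_inter_preimage hGopen (hDoc j).1
  have hGsmono : Monotone Gs := fun a b hab =>
    inter_subset_inter_right _ (preimage_mono (hDseqmono hab))
  have hGscover : G ⊆ ⋃ j, Gs j := by
    intro x hx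
    have hxD : θ x ∈ D := hθmaps hx
    rw [← hDunion] at hxD
    obtain ⟨j, hj⟩ := mem_iUnion.1 hxD
    exact mem_iUnion.2 ⟨j, hx, hj⟩
  have habsorb : ∀ S : Set (Fin m → ℂ), IsCompact S → S ⊆ G →
      ∃ N, ∀ j, N ≤ j → S ⊆ Gs j := by
    intro S hS hSG
    obtain ⟨i, hi⟩ := hS.elim_directed_cover Gs hGsopen (hSG.trans hGscover)
      hGsmono.directed_le
    exact ⟨i, fun j hj => hi.trans (hGsmono hj)⟩
  set H : ℕ → (Fin m → ℂ) × (Fin m → ℂ) → (Fin m → ℂ) := fun j p =>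
    ι (gg j ((1/2 : ℝ) • ff j (θ p.1) + (1/2 : ℝ) • ff j (θ p.2))) with hHdef
  set Q : ℕ → Set ((Fin m → ℂ) × (Fin m → ℂ)) := fun j => Gs j ×ˢ Gs j with hQdef
  have hQopen : ∀ j, IsOpen (Q j) := fun j => (hGsopen j).prod (hGsopen j)
  have hmid : ∀ j, ∀ p ∈ Q j,
      ((1/2:ℝ) • ff j (θ p.1) + (1/2:ℝ) • ff j (θ p.2)) ∈ Ω j := by
    intro j p hp
    exact hΩconv j (hffM j hp.1.2) (hffM j hp.2.2)
      (by norm_num) (by norm_num) (by norm_num)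
  have hHdiff : ∀ j, DifferentiableOn ℂ (H j) (Q j) := by
    intro j
    have h1 : DifferentiableOn ℂ (fun p : (Fin m → ℂ) × (Fin m → ℂ) => ff j (θ p.1)) (Q j) := by
      have ht : DifferentiableOn ℂ (fun p : (Fin m → ℂ) × (Fin m → ℂ) => θ p.1) (Q j) :=
        hθ.comp differentiableOn_fst (fun p hp => hp.1.1)
      exact (hffD j).comp ht (fun p hp => hp.1.2)
    have h2 : DifferentiableOn ℂ (fun p : (Fin m → ℂ) × (Fin m → ℂ) => ff j (θ p.2)) (Q j) := by
      have ht : DifferentiableOn ℂ (fun p : (Fin m → ℂ) × (Fin m → ℂ) => θ p.2) (Q j) :=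
        hθ.comp differentiableOn_snd (fun p hp => hp.2.1)
      exact (hffD j).comp ht (fun p hp => hp.2.2)
    have hsum : DifferentiableOn ℂ
        (fun p : (Fin m → ℂ) × (Fin m → ℂ) =>
          (1/2:ℝ) • ff j (θ p.1) + (1/2:ℝ) • ff j (θ p.2)) (Q j) :=
      (h1.const_smul ((1:ℝ)/2)).add (h2.const_smul ((1:ℝ)/2))
    have hg : DifferentiableOn ℂ
        (fun p : (Fin m → ℂ) × (Fin m → ℂ) =>
          gg j ((1/2:ℝ) • ff j (θ p.1) + (1/2:ℝ) • ff j (θ p.2))) (Q j) :=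
      (hggD j).comp hsum (hmid j)
    exact hι.comp hg (fun p hp => hDsub j (hggM j (hmid j p hp)))
  have hHmaps : ∀ j, MapsTo (H j) (Q j) G :=
    fun j p hp => hιmaps (hDsub j (hggM j (hmid j p hp)))
  have hHdiag : ∀ j, ∀ x ∈ Gs j, H j (x, x) = x := by
    intro j x hx
    have h1 : (1/2:ℝ) • ff j (θ x) + (1/2:ℝ) • ff j (θ x) = ff j (θ x) := by
      rw [← add_smul]; norm_num
    show ι (gg j ((1/2:ℝ) • ff j (θ x) + (1/2:ℝ) • ff j (θ x))) = x
    rw [h1, hgf j _ hx.2, hretract x hx.1]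
  have hHsymm : ∀ j (z w : Fin m → ℂ), H j (z, w) = H j (w, z) := by
    intro j z w
    show ι (gg j ((1/2:ℝ) • ff j (θ z) + (1/2:ℝ) • ff j (θ w))) =
      ι (gg j ((1/2:ℝ) • ff j (θ w) + (1/2:ℝ) • ff j (θ z)))
    rw [add_comm]
  have habsorb2 : ∀ (p : (Fin m → ℂ) × (Fin m → ℂ)) (ε : ℝ), 0 < ε →
      closedBall p ε ⊆ G ×ˢ G → ∃ N, ∀ j, N ≤ j → closedBall p ε ⊆ Q j := by
    intro p ε hε hsub
    have h1 : closedBall p.1 ε ⊆ G := by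
      intro x hx
      have hmem : (x, p.2) ∈ closedBall p ε := by
        rw [← closedBall_prod_same]
        exact ⟨hx, mem_closedBall_self hε.le⟩
      exact (hsub hmem).1
    have h2 : closedBall p.2 ε ⊆ G := by
      intro x hx
      have hmem : (p.1, x) ∈ closedBall p ε := by
        rw [← closedBall_prod_same]
        exact ⟨mem_closedBall_self hε.le, hx⟩
      exact (hsub hmem).2
    obtain ⟨N₁, hN₁⟩ := habsorb _ (isCompact_closedBall p.1 ε) h1
    obtain ⟨N₂, hN₂⟩ := habsorb _ (isCompact_closedBall p.2 ε) h2
    refine ⟨max N₁ N₂, fun j hj => ?_⟩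
    rw [← closedBall_prod_same]
    exact Set.prod_mono (hN₁ j (le_trans (le_max_left _ _) hj))
      (hN₂ j (le_trans (le_max_right _ _) hj))
  -- Step 3: propagation of compact bounds
  set P : (Fin m → ℂ) × (Fin m → ℂ) → Prop := fun p =>
    ∃ C : Set (Fin m → ℂ), ∃ N : ℕ, IsCompact C ∧ C ⊆ G ∧ ∀ j, N ≤ j → H j p ∈ C
    with hPdef
  have prop : ∀ p ∈ G ×ˢ G, ∀ ε : ℝ, 0 < ε → closedBall p ε ⊆ G ×ˢ G → P p →
      ∃ C N, IsCompact C ∧ C ⊆ G ∧ (∀ j, N ≤ j → closedBall p ε ⊆ Q j) ∧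
        (∀ j, N ≤ j → ∀ q ∈ closedBall p (ε/2), H j q ∈ C) := by
    rintro p hp ε hε hsub ⟨C₀, N₀, hC₀c, hC₀G, hC₀⟩
    obtain ⟨N₁, hN₁⟩ := habsorb2 p ε hε hsub
    obtain ⟨C₁, hC₁c, hC₁G, hC₁⟩ := key1 C₀ hC₀c hC₀G
    refine ⟨C₀ ∪ C₁, max N₀ N₁, hC₀c.union hC₁c, union_subset hC₀G hC₁G,
      fun j hj => hN₁ j (le_trans (le_max_right _ _) hj), ?_⟩
    intro j hj q hq
    have hjN₀ : N₀ ≤ j := le_trans (le_max_left _ _) hj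
    have hjN₁ : N₁ ≤ j := le_trans (le_max_right _ _) hj
    by_cases hqp : q = p
    · subst hqp
      exact mem_union_left _ (hC₀ j hjN₀)
    · set v := q - p with hvdef
      have hvne : v ≠ 0 := sub_ne_zero.2 hqp
      have hvn : 0 < ‖v‖ := norm_pos_iff.2 hvne
      set c : ℂ := ((ε / ‖v‖ : ℝ) : ℂ) with hcdef
      have hcnorm : ‖c‖ = ε / ‖v‖ := by
        rw [hcdef, Complex.norm_real, Real.norm_eq_abs, abs_of_pos (div_pos hε hvn)]
      set u : ℂ → (Fin m → ℂ) := fun t => H j (p + (t * c) • v) with hudef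
      have hmapball : ∀ t : ℂ, t ∈ ball (0:ℂ) 1 → p + (t * c) • v ∈ ball p ε := by
        intro t ht
        rw [mem_ball, dist_eq_norm, add_sub_cancel_left, norm_smul, norm_mul, hcnorm]
        rw [mem_ball, dist_zero_right] at ht
        calc ‖t‖ * (ε / ‖v‖) * ‖v‖ = ‖t‖ * ε := by field_simp
          _ < 1 * ε := by exact mul_lt_mul_of_pos_right ht hε
          _ = ε := one_mul ε
      have hmapQ : ∀ t : ℂ, t ∈ ball (0:ℂ) 1 → p + (t * c) • v ∈ Q j := fun t ht =>
        hN₁ j hjN₁ (ball_subset_closedBall (hmapball t ht))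
      have huD : DifferentiableOn ℂ u (ball (0:ℂ) 1) := by
        apply (hHdiff j).comp
          (((differentiable_id.mul_const c).smul_const v).const_add p).differentiableOn
        exact fun t ht => hmapQ t ht
      have huM : MapsTo u (ball (0:ℂ) 1) G := fun t ht => hHmaps j (hmapQ t ht)
      have hu0 : u 0 ∈ C₀ := by
        have : u 0 = H j p := by rw [hudef]; simp
        rw [this]; exact hC₀ j hjN₀
      set t₀ : ℂ := ((‖v‖ / ε : ℝ) : ℂ) with ht₀def
      have ht₀n : ‖t₀‖ ≤ 1/2 := by
        rw [ht₀def, Complex.norm_real, Real.norm_eq_abs, abs_of_pos (div_pos hvn hε)]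
        rw [mem_closedBall, dist_eq_norm] at hq
        rw [div_le_div_iff₀ hε (by norm_num : (0:ℝ) < 2)]
        calc ‖v‖ * 2 ≤ (ε/2) * 2 := by
              apply mul_le_mul_of_nonneg_right _ (by norm_num)
              exact hq
          _ = 1 * ε := by ring
      have hmem := hC₁ u huD huM hu0 t₀ ht₀n
      have huq : u t₀ = H j q := by
        have hc1 : t₀ * c = 1 := by
          rw [ht₀def, hcdef, ← Complex.ofReal_mul]
          norm_cast
          field_simp
        rw [hudef]
        simp only [hc1, one_smul, hvdef]
        have harg : p + (q - p) = q := by abel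
        rw [harg]
      rw [huq] at hmem
      exact mem_union_right _ hmem
  -- Step 4: the bound propagates to all of G ×ˢ G (clopen argument)
  have hballGG : ∀ p ∈ G ×ˢ G, ∃ ε : ℝ, 0 < ε ∧ closedBall p ε ⊆ G ×ˢ G := by
    intro p hp
    obtain ⟨ε, hε, hsub⟩ := Metric.isOpen_iff.1 (hGopen.prod hGopen) p hp
    exact ⟨ε/2, half_pos hε, (closedBall_subset_ball (half_lt_self hε)).trans hsub⟩
  have hPall : ∀ p ∈ G ×ˢ G, P p := by
    by_contra hcon
    push_neg at hcon
    obtain ⟨p₀, hp₀, hp₀n⟩ := hcon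
    set U : Set ((Fin m → ℂ) × (Fin m → ℂ)) := {p | p ∈ G ×ˢ G ∧ P p} with hUdef
    set V : Set ((Fin m → ℂ) × (Fin m → ℂ)) := {p | p ∈ G ×ˢ G ∧ ¬ P p} with hVdef
    have hUopen : IsOpen U := by
      rw [Metric.isOpen_iff]
      rintro p ⟨hp, hPp⟩
      obtain ⟨ε, hε, hsub⟩ := hballGG p hp
      obtain ⟨C, N, hCc, hCG, hQs, hbd⟩ := prop p hp ε hε hsub hPp
      refine ⟨ε/2, half_pos hε, fun q hq => ?_⟩
      have hq2 : q ∈ closedBall p (ε/2) := ball_subset_closedBall hq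
      have hqGG : q ∈ G ×ˢ G :=
        hsub (closedBall_subset_closedBall (half_le_self hε.le) hq2)
      exact ⟨hqGG, C, N, hCc, hCG, fun j hj => hbd j hj q hq2⟩
    have hVopen : IsOpen V := by
      rw [Metric.isOpen_iff]
      rintro p ⟨hp, hPp⟩
      obtain ⟨ε, hε, hsub⟩ := hballGG p hp
      refine ⟨ε/8, by positivity, fun q hq => ?_⟩
      have hq2 : q ∈ closedBall p ε :=
        closedBall_subset_closedBall (by linarith) (ball_subset_closedBall hq)
      have hqGG : q ∈ G ×ˢ G := hsub hq2
      refine ⟨hqGG, fun hPq => hPp ?_⟩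
      have hsub2 : closedBall q (ε/2) ⊆ G ×ˢ G := by
        refine Set.Subset.trans ?_ hsub
        intro y hy
        rw [mem_closedBall] at hy ⊢
        calc dist y p ≤ dist y q + dist q p := dist_triangle y q p
          _ ≤ ε/2 + ε/8 := by
              apply add_le_add hy
              exact le_of_lt (mem_ball.1 hq)
          _ ≤ ε := by linarith
      obtain ⟨C, N, hCc, hCG, hQs, hbd⟩ := prop q hqGG (ε/2) (half_pos hε) hsub2 hPq
      have hpmem : p ∈ closedBall q (ε/2/2) := by
        rw [mem_closedBall, dist_comm]
        calc dist q p ≤ ε/8 := le_of_lt (mem_ball.1 hq)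
          _ ≤ ε/2/2 := by linarith
      exact ⟨C, N, hCc, hCG, fun j hj => hbd j hj p hpmem⟩
    obtain ⟨Nz, hNz⟩ := habsorb {z₀} isCompact_singleton (singleton_subset_iff.2 hz₀)
    have hUne : ((G ×ˢ G) ∩ U).Nonempty := by
      refine ⟨(z₀, z₀), ⟨hz₀, hz₀⟩, ⟨hz₀, hz₀⟩, {z₀}, Nz, isCompact_singleton,
        singleton_subset_iff.2 hz₀, fun j hj => ?_⟩
      rw [hHdiag j z₀ (hNz j hj rfl)]
      exact rfl
    have hVne : ((G ×ˢ G) ∩ V).Nonempty := ⟨p₀, hp₀, hp₀, hp₀n⟩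
    have hcover : G ×ˢ G ⊆ U ∪ V := by
      intro p hp
      by_cases h : P p
      · exact Or.inl ⟨hp, h⟩
      · exact Or.inr ⟨hp, h⟩
    obtain ⟨x, hx⟩ := (hGconn.isPreconnected.prod hGconn.isPreconnected)
      U V hUopen hVopen hcover hUne hVne
    exact hx.2.2.2 hx.2.1.2
  have hQall : ∀ p ∈ G ×ˢ G, ∃ ε : ℝ, 0 < ε ∧ ∃ C N, IsCompact C ∧ C ⊆ G ∧
      closedBall p ε ⊆ G ×ˢ G ∧ (∀ j, N ≤ j → closedBall p ε ⊆ Q j) ∧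
      (∀ j, N ≤ j → ∀ q ∈ closedBall p (ε/2), H j q ∈ C) := by
    intro p hp
    obtain ⟨ε, hε, hsub⟩ := hballGG p hp
    obtain ⟨C, N, hCc, hCG, hQs, hbd⟩ := prop p hp ε hε hsub (hPall p hp)
    exact ⟨ε, hε, C, N, hCc, hCG, hsub, hQs, hbd⟩
  -- Step 5: limit along an ultrafilter
  set 𝒰 : Ultrafilter ℕ := Ultrafilter.of atTop with h𝒰def
  have h𝒰le : (𝒰 : Filter ℕ) ≤ atTop := Ultrafilter.of_le atTop
  have hge : ∀ N : ℕ, ∀ᶠ j in (𝒰 : Filter ℕ), N ≤ j := fun N => h𝒰le (eventually_ge_atTop N)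
  set F : (Fin m → ℂ) × (Fin m → ℂ) → (Fin m → ℂ) :=
    fun q => limUnder (𝒰 : Filter ℕ) (fun j => H j q) with hFdef
  have hFlim : ∀ q ∈ G ×ˢ G,
      Tendsto (fun j => H j q) (𝒰 : Filter ℕ) (𝓝 (F q)) ∧ F q ∈ G := by
    intro q hq
    obtain ⟨C, N, hCc, hCG, hC⟩ := hPall q hq
    have hev : ∀ᶠ j in (𝒰 : Filter ℕ), H j q ∈ C := (hge N).mono (fun j hj => hC j hj)
    have hmem : C ∈ Ultrafilter.map (fun j => H j q) 𝒰 := hev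
    obtain ⟨a, haC, ha⟩ := hCc.ultrafilter_le_nhds' _ hmem
    have hTend : Tendsto (fun j => H j q) (𝒰 : Filter ℕ) (𝓝 a) := ha
    have hFq : F q = a := hTend.limUnder_eq
    rw [hFq]
    exact ⟨hTend, hCG haC⟩
  refine ⟨F, ?_, fun q hq => (hFlim q hq).2, ?_, ?_⟩
  · -- differentiability
    intro p hp
    obtain ⟨ε, hε, C, N, hCc, hCG, hsubGG, hQs, hbd⟩ := hQall p hp
    obtain ⟨M, hM⟩ := hCc.isBounded.subset_closedBall 0
    set M' : ℝ := max M 0 with hM'def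
    have hMC : ∀ x ∈ C, ‖x‖ ≤ M' := fun x hx =>
      le_trans (mem_closedBall_zero_iff.1 (hM hx)) (le_max_left _ _)
    have hM'0 : 0 ≤ M' := le_max_right _ _
    set B₁ : ℝ := 2 * M' + 1 with hB₁def
    set L : ℝ := B₁ / (ε/4) with hLdef
    have hLpos : 0 < L := by positivity
    -- equicontinuity
    have hlip : ∀ j, N ≤ j → ∀ x ∈ closedBall p (ε/4), ∀ y ∈ ball x (ε/4),
        ‖H j y - H j x‖ ≤ L * ‖y - x‖ := by
      intro j hj x hx y hy
      have hxp : dist x p ≤ ε/4 := mem_closedBall.1 hx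
      have hballsub : ball x (ε/4) ⊆ ball p ε := by
        intro y hy
        rw [mem_ball] at hy ⊢
        calc dist y p ≤ dist y x + dist x p := dist_triangle _ _ _
          _ < ε/4 + ε/4 := add_lt_add_of_lt_of_le hy hxp
          _ ≤ ε := by linarith
      have hsubC : ball x (ε/4) ⊆ closedBall p (ε/2) := by
        intro y hy
        rw [mem_ball] at hy
        rw [mem_closedBall]
        calc dist y p ≤ dist y x + dist x p := dist_triangle _ _ _
          _ ≤ ε/4 + ε/4 := add_le_add hy.le hxp
          _ = ε/2 := by ring
      have hxC : H j x ∈ C :=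
        hbd j hj x (closedBall_subset_closedBall (by linarith) hx)
      have hbdq : ∀ q ∈ ball x (ε/4), ‖H j q - H j x‖ < B₁ := by
        intro q hq
        calc ‖H j q - H j x‖ ≤ ‖H j q‖ + ‖H j x‖ := norm_sub_le _ _
          _ ≤ M' + M' := add_le_add (hMC _ (hbd j hj q (hsubC hq))) (hMC _ hxC)
          _ < 2 * M' + 1 := by linarith
      have hdiffb : DifferentiableOn ℂ (H j) (ball p ε) :=
        (hHdiff j).mono (ball_subset_closedBall.trans (hQs j hj))
      exact (line_bound (H j) isOpen_ball hdiffb (by positivity) (by positivity)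
        hballsub hbdq).1 y hy
    -- uniform Cauchy in C⁰ on closedBall p (ε/4)
    have hucauchy : ∀ η : ℝ, 0 < η → ∀ᶠ jk : ℕ × ℕ in (𝒰 : Filter ℕ) ×ˢ (𝒰 : Filter ℕ),
        ∀ x ∈ closedBall p (ε/4), dist (H jk.1 x) (H jk.2 x) < η := by
      intro η hη
      set δ : ℝ := min (ε/8) (η/(4*(L+1))) with hδdef
      have hδpos : 0 < δ := lt_min (by positivity) (by positivity)
      have hcov : closedBall p (ε/4) ⊆ ⋃ i : ↥(closedBall p (ε/4)), ball (↑i) δ :=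
        fun x hx => mem_iUnion.2 ⟨⟨x, hx⟩, mem_ball_self hδpos⟩
      obtain ⟨t, ht⟩ := (isCompact_closedBall p (ε/4)).elim_finite_subcover _
        (fun _ => isOpen_ball) hcov
      have hev1 : ∀ᶠ jk : ℕ × ℕ in (𝒰 : Filter ℕ) ×ˢ (𝒰 : Filter ℕ),
          ∀ i ∈ t, dist (H jk.1 (↑i : (Fin m → ℂ) × (Fin m → ℂ))) (H jk.2 (↑i : (Fin m → ℂ) × (Fin m → ℂ))) < η/2 := by
        rw [eventually_all_finset]
        intro i hi
        have hiGG : (↑i : (Fin m → ℂ) × (Fin m → ℂ)) ∈ G ×ˢ G :=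
          hsubGG (closedBall_subset_closedBall (by linarith) i.2)
        have h3 : ∀ᶠ j in (𝒰 : Filter ℕ), dist (H j (↑i : (Fin m → ℂ) × (Fin m → ℂ))) (F (↑i : (Fin m → ℂ) × (Fin m → ℂ))) < η/4 :=
          (Metric.tendsto_nhds.1 (hFlim _ hiGG).1) (η/4) (by positivity)
        filter_upwards [h3.prod_inl (𝒰 : Filter ℕ), h3.prod_inr (𝒰 : Filter ℕ)] with jk ha hb
        calc dist (H jk.1 (i:_)) (H jk.2 (i:_))
            ≤ dist (H jk.1 (i:_)) (F (i:_)) + dist (F (i:_)) (H jk.2 (i:_)) :=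
              dist_triangle _ _ _
          _ < η/4 + η/4 := by rw [dist_comm (F (i:_))]; exact add_lt_add ha hb
          _ = η/2 := by ring
      have hev2 : ∀ᶠ jk : ℕ × ℕ in (𝒰 : Filter ℕ) ×ˢ (𝒰 : Filter ℕ),
          N ≤ jk.1 ∧ N ≤ jk.2 :=
        ((hge N).prod_inl (𝒰 : Filter ℕ)).and ((hge N).prod_inr (𝒰 : Filter ℕ))
      filter_upwards [hev1, hev2] with jk h1 h2
      intro x hx
      obtain ⟨i, hit, hxi⟩ : ∃ i ∈ t, x ∈ ball (↑i : (Fin m → ℂ) × (Fin m → ℂ)) δ := by simpa using ht hx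
      have hxball : x ∈ ball (↑i : (Fin m → ℂ) × (Fin m → ℂ)) (ε/4) :=
        ball_subset_ball (le_trans (min_le_left _ _) (by linarith)) hxi
      have hd1 : ‖H jk.1 x - H jk.1 (i:_)‖ ≤ L * ‖x - (i:_)‖ :=
        hlip jk.1 h2.1 (i:_) i.2 x hxball
      have hd2 : ‖H jk.2 x - H jk.2 (i:_)‖ ≤ L * ‖x - (i:_)‖ :=
        hlip jk.2 h2.2 (i:_) i.2 x hxball
      have hxin : ‖x - (i:_)‖ < δ := by rw [← dist_eq_norm]; exact mem_ball.1 hxi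
      have hLδ : L * ‖x - (i:_)‖ ≤ η/4 := by
        have h5 : L * ‖x - (i:_)‖ ≤ L * (η/(4*(L+1))) := by
          apply mul_le_mul_of_nonneg_left _ hLpos.le
          exact le_trans hxin.le (min_le_right _ _)
        have h6 : L * (η/(4*(L+1))) ≤ η/4 := by
          rw [mul_div_assoc']
          rw [div_le_div_iff₀ (by positivity) (by norm_num : (0:ℝ) < 4)]
          nlinarith [hLpos.le, hη.le]
        linarith
      have htri : dist (H jk.1 x) (H jk.2 x)
          ≤ dist (H jk.1 x) (H jk.1 (i:_)) + dist (H jk.1 (i:_)) (H jk.2 (i:_))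
            + dist (H jk.2 (i:_)) (H jk.2 x) := dist_triangle4 _ _ _ _
      have h1' := h1 i hit
      simp only [dist_eq_norm] at htri h1' ⊢
      linarith [htri, hd1, hd2, hLδ, h1',
        norm_sub_rev (H jk.2 x) (H jk.2 (i:_))]
    -- derivatives
    set Hf' : ℕ → ((Fin m → ℂ) × (Fin m → ℂ)) →
        ((Fin m → ℂ) × (Fin m → ℂ)) →L[ℂ] (Fin m → ℂ) :=
      fun j x => if N ≤ j then fderiv ℂ (H j) x else 0 with hHf'def
    have hdiffat : ∀ j, N ≤ j → ∀ x ∈ closedBall p ε, DifferentiableAt ℂ (H j) x :=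
      fun j hj x hx => (hHdiff j).differentiableAt ((hQopen j).mem_nhds (hQs j hj hx))
    have hdercauchy : ∀ η : ℝ, 0 < η →
        ∀ᶠ jk : ℕ × ℕ in (𝒰 : Filter ℕ) ×ˢ (𝒰 : Filter ℕ),
        ∀ x ∈ closedBall p (ε/8), dist (Hf' jk.1 x) (Hf' jk.2 x) < η := by
      intro η hη
      set η₂ : ℝ := η * ε / 100 with hη₂def
      have hη₂pos : 0 < η₂ := by positivity
      have hev2 : ∀ᶠ jk : ℕ × ℕ in (𝒰 : Filter ℕ) ×ˢ (𝒰 : Filter ℕ),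
          N ≤ jk.1 ∧ N ≤ jk.2 :=
        ((hge N).prod_inl (𝒰 : Filter ℕ)).and ((hge N).prod_inr (𝒰 : Filter ℕ))
      filter_upwards [hucauchy η₂ hη₂pos, hev2] with jk hsmall h2
      intro x hx
      have hxp : dist x p ≤ ε/8 := mem_closedBall.1 hx
      set d : (Fin m → ℂ) × (Fin m → ℂ) → (Fin m → ℂ) :=
        fun q => H jk.1 q - H jk.2 q with hddef
      have hdD : DifferentiableOn ℂ d (ball p ε) :=
        ((hHdiff jk.1).mono (ball_subset_closedBall.trans (hQs jk.1 h2.1))).sub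
          ((hHdiff jk.2).mono (ball_subset_closedBall.trans (hQs jk.2 h2.2)))
      have hballx : ball x (ε/8) ⊆ ball p ε := by
        intro y hy
        rw [mem_ball] at hy ⊢
        calc dist y p ≤ dist y x + dist x p := dist_triangle _ _ _
          _ < ε/8 + ε/8 := add_lt_add_of_lt_of_le hy hxp
          _ ≤ ε := by linarith
      have hxq : x ∈ closedBall p (ε/4) :=
        closedBall_subset_closedBall (by linarith) hx
      have hdbd : ∀ q ∈ ball x (ε/8), ‖d q - d x‖ < 3 * η₂ := by
        intro q hq
        have hqmem : q ∈ closedBall p (ε/4) := by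
          rw [mem_closedBall]
          calc dist q p ≤ dist q x + dist x p := dist_triangle _ _ _
            _ ≤ ε/8 + ε/8 := add_le_add (mem_ball.1 hq).le hxp
            _ = ε/4 := by ring
        have hq1 : ‖d q‖ < η₂ := by
          rw [hddef]; rw [← dist_eq_norm]; exact hsmall q hqmem
        have hq2 : ‖d x‖ < η₂ := by
          rw [hddef]; rw [← dist_eq_norm]; exact hsmall x hxq
        calc ‖d q - d x‖ ≤ ‖d q‖ + ‖d x‖ := norm_sub_le _ _
          _ < η₂ + η₂ := add_lt_add hq1 hq2
          _ < 3 * η₂ := by linarith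
      have hline := (line_bound d isOpen_ball hdD (by positivity : (0:ℝ) < ε/8)
        (by positivity : (0:ℝ) < 3 * η₂) hballx hdbd).2
      have hxball : x ∈ closedBall p ε := closedBall_subset_closedBall (by linarith) hx
      have hda : DifferentiableAt ℂ (H jk.1) x := hdiffat jk.1 h2.1 x hxball
      have hdb : DifferentiableAt ℂ (H jk.2) x := hdiffat jk.2 h2.2 x hxball
      have hfd : fderiv ℂ d x = fderiv ℂ (H jk.1) x - fderiv ℂ (H jk.2) x :=
        fderiv_sub hda hdb
      have hopn : ‖fderiv ℂ (H jk.1) x - fderiv ℂ (H jk.2) x‖ ≤ 3 * η₂ / (ε/8) := by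
        rw [← hfd]
        apply ContinuousLinearMap.opNorm_le_bound _ (by positivity)
        exact fun v => hline v
      have hunf : dist (Hf' jk.1 x) (Hf' jk.2 x)
          = ‖fderiv ℂ (H jk.1) x - fderiv ℂ (H jk.2) x‖ := by
        rw [hHf'def]
        simp only [if_pos h2.1, if_pos h2.2]
        rw [dist_eq_norm]
      rw [hunf]
      calc ‖fderiv ℂ (H jk.1) x - fderiv ℂ (H jk.2) x‖ ≤ 3 * η₂ / (ε/8) := hopn
        _ = 24 * η₂ / ε := by field_simp; ring
        _ = 24 * (η * ε / 100) / ε := by rw [hη₂def]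
        _ = 24 * η / 100 := by field_simp
        _ < η := by linarith
    -- limit of the derivatives
    set g' : ((Fin m → ℂ) × (Fin m → ℂ)) →
        ((Fin m → ℂ) × (Fin m → ℂ)) →L[ℂ] (Fin m → ℂ) :=
      fun x => limUnder (𝒰 : Filter ℕ) (fun j => Hf' j x) with hg'def
    have htendsder : ∀ x ∈ closedBall p (ε/8),
        Tendsto (fun j => Hf' j x) (𝒰 : Filter ℕ) (𝓝 (g' x)) := by
      intro x hx
      have hcauchy : Cauchy (Filter.map (fun j => Hf' j x) (𝒰 : Filter ℕ)) := by
        rw [cauchy_map_iff]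
        refine ⟨inferInstance, ?_⟩
        rw [Metric.uniformity_basis_dist.tendsto_right_iff]
        intro η hη
        exact (hdercauchy η hη).mono fun jk hjk => hjk x hx
      obtain ⟨a, ha⟩ := CompleteSpace.complete hcauchy
      have hTa : Tendsto (fun j => Hf' j x) (𝒰 : Filter ℕ) (𝓝 a) := ha
      have : g' x = a := hTa.limUnder_eq
      rw [this]; exact hTa
    have hUC : UniformCauchySeqOn Hf' (𝒰 : Filter ℕ) (closedBall p (ε/8)) :=
      uniformCauchySeqOn_of_dist hdercauchy
    have hTUder : TendstoUniformlyOn Hf' g' (𝒰 : Filter ℕ) (closedBall p (ε/8)) :=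
      hUC.tendstoUniformlyOn_of_tendsto htendsder
    -- modified sequence defined everywhere
    set Hf : ℕ → ((Fin m → ℂ) × (Fin m → ℂ)) → (Fin m → ℂ) :=
      fun j => if N ≤ j then H j else fun _ => 0 with hHfdef
    have hHasF : ∀ j : ℕ, ∀ x ∈ ball p (ε/8), HasFDerivAt (Hf j) (Hf' j x) x := by
      intro j x hx
      by_cases hj : N ≤ j
      · rw [hHfdef, hHf'def]
        simp only [if_pos hj]
        exact (hdiffat j hj x (closedBall_subset_closedBall (by linarith)
          (ball_subset_closedBall hx))).hasFDerivAt
      · rw [hHfdef, hHf'def]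
        simp only [if_neg hj]
        exact hasFDerivAt_const 0 x
    have hfg : ∀ x ∈ ball p (ε/8), Tendsto (fun j => Hf j x) (𝒰 : Filter ℕ) (𝓝 (F x)) := by
      intro x hx
      have hxGG : x ∈ G ×ˢ G := hsubGG (closedBall_subset_closedBall (by linarith)
        (ball_subset_closedBall hx))
      apply Tendsto.congr' _ (hFlim x hxGG).1
      filter_upwards [hge N] with j hj
      rw [hHfdef]; simp only [if_pos hj]
    have happly : HasFDerivAt F (g' p) p :=
      hasFDerivAt_of_tendstoUniformlyOn isOpen_ball
        (hTUder.mono ball_subset_closedBall) hHasF hfg (mem_ball_self (by positivity))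
    exact happly.differentiableAt.differentiableWithinAt
  · -- diagonal
    intro x hx
    obtain ⟨N, hN⟩ := habsorb {x} isCompact_singleton (singleton_subset_iff.2 hx)
    have hev : ∀ᶠ j in (𝒰 : Filter ℕ), H j (x, x) = x :=
      (hge N).mono fun j hj => hHdiag j x (hN j hj rfl)
    have h1 : Tendsto (fun j => H j (x, x)) (𝒰 : Filter ℕ) (𝓝 x) :=
      Tendsto.congr' (by filter_upwards [hev] with j hj using hj.symm) tendsto_const_nhds
    exact tendsto_nhds_unique ((hFlim (x, x) ⟨hx, hx⟩).1) h1
  · -- symmetry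
    intro z hz w hw
    have hfun : (fun j => H j (z, w)) = (fun j => H j (w, z)) :=
      funext fun j => hHsymm j z w
    show limUnder (𝒰 : Filter ℕ) (fun j => H j (z, w))
      = limUnder (𝒰 : Filter ℕ) (fun j => H j (w, z))
    rw [hfun]
end
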